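/- arXiv:0812.4209 — 5 statements merged into one kernel-verified Lean document; each statement's English description precedes it below -/
import Mathlib

section
/- There exists an absolute constant C′ with the following property: for every C ≥ 0 and every even, twice continuously differentiable function g : ℝ → ℂ satisfying |g′(ζ)| ≤ C (1+|ζ|)^{−1} and |g″(ζ)| ≤ C (1+|ζ|)^{−2} for all ζ ∈ ℝ, the function F(t) = ∫_ℝ g″(ζ) e^{iζt} dζ (the integral converges absolutely) satisfies F(0) = 0 and |F(t)| ≤ C′ C |t| for all t ∈ ℝ. (This is the core estimate in the proof of Lemma 5.3(i) of the paper, with g playing the role of the Fourier transform of the distribution K and F(t) = −t² K(t).) -/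
/-!
Since `g'` decays at infinity, `∫ g'' = 0`, so `F(t) = ∫ g''(ζ) (e^{iζt} - 1) dζ`, and as `g''` is
even this is `∫ g''(ζ) (cos(ζt) - 1) dζ`. The quadratic vanishing of `cos u - 1` is what gives a
linear bound (with `|e^{iu} - 1|` one only gets `C |t| log (1/|t|)`): from
`1 - cos u ≤ 3u²/(1+u²)` and `ζ² ‖g''(ζ)‖ ≤ C` we get
`‖F(t)‖ ≤ 3 C t² ∫ (1 + ζ²t²)⁻¹ dζ = 3π C |t|`.
-/

open MeasureTheory Filter Topology

namespace Function

variable {𝕜 E : Type*} [NontriviallyNormedField 𝕜] [NormedAddCommGroup E] [NormedSpace 𝕜 E]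
  {f : 𝕜 → E}

theorem Even.deriv (hf : Function.Even f) : Function.Odd (_root_.deriv f) := fun x => by
  have h := deriv_comp_neg f (-x)
  rwa [show (fun y => f (-y)) = f from funext hf, neg_neg] at h

theorem Odd.deriv (hf : Function.Odd f) : Function.Even (_root_.deriv f) := fun x => by
  have h := deriv_comp_neg f x
  rw [show (fun y => f (-y)) = fun y => -f y from funext hf, deriv.fun_neg, neg_inj] at h
  exact h.symm

end Function

theorem Real.one_sub_cos_le_three_mul_sq_div (u : ℝ) :
    1 - Real.cos u ≤ 3 * u ^ 2 / (1 + u ^ 2) := by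
  have h₁ := Real.one_sub_sq_div_two_le_cos (x := u)
  have h₂ := Real.neg_one_le_cos u
  rw [le_div_iff₀ (by positivity)]
  rcases le_or_gt (u ^ 2) 4 with h | h <;> nlinarith

theorem Real.integral_inv_one_add_sq_mul (t : ℝ) :
    ∫ ζ : ℝ, (1 + (ζ * t) ^ 2)⁻¹ = Real.pi / |t| := by
  rw [Measure.integral_comp_mul_right (fun u : ℝ => (1 + u ^ 2)⁻¹),
    integral_univ_inv_one_add_sq, smul_eq_mul, abs_inv, inv_mul_eq_div]

theorem tendsto_cocompact_zero_of_norm_le_div_one_add_abs {E : Type*} [NormedAddCommGroup E]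
    {f : ℝ → E} {C : ℝ} (hf : ∀ ζ, ‖f ζ‖ ≤ C / (1 + |ζ|)) :
    Tendsto f (cocompact ℝ) (𝓝 0) :=
  squeeze_zero_norm hf <| tendsto_const_nhds.div_atTop <|
    tendsto_atTop_add_const_left _ 1 tendsto_norm_cocompact_atTop

theorem integrable_of_norm_le_div_one_add_abs_sq {E : Type*} [NormedAddCommGroup E]
    {f : ℝ → E} {C : ℝ} (hmeas : AEStronglyMeasurable f)
    (hf : ∀ ζ, ‖f ζ‖ ≤ C / (1 + |ζ|) ^ 2) : Integrable f := by
  refine (integrable_inv_one_add_sq.const_mul C).mono' hmeas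
    (ae_of_all _ fun ζ => (hf ζ).trans ?_)
  have hC : 0 ≤ C := by simpa using (norm_nonneg _).trans (hf 0)
  rw [div_eq_mul_inv]
  gcongr
  nlinarith [abs_nonneg ζ, sq_abs ζ]

theorem Complex.norm_exp_I_mul_ofReal_mul_ofReal (ζ t : ℝ) :
    ‖Complex.exp (Complex.I * ζ * t)‖ = 1 := by
  rw [← Complex.norm_exp_ofReal_mul_I (ζ * t)]; congr 2; push_cast; ring

theorem MeasureTheory.Integrable.mul_exp_I_mul {h : ℝ → ℂ} (hh : Integrable h) (t : ℝ) :
    Integrable fun ζ : ℝ => h ζ * Complex.exp (Complex.I * ζ * t) :=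
  hh.mul_bdd (by fun_prop)
    (ae_of_all _ fun ζ => (Complex.norm_exp_I_mul_ofReal_mul_ofReal ζ t).le)

theorem integral_mul_exp_I_mul_eq_integral_mul_cos {h : ℝ → ℂ} (heven : Function.Even h)
    (hh : Integrable h) (t : ℝ) :
    ∫ ζ : ℝ, h ζ * Complex.exp (Complex.I * ζ * t) = ∫ ζ : ℝ, h ζ * Real.cos (ζ * t) := by
  have hreflect : ∫ ζ : ℝ, h ζ * Complex.exp (Complex.I * ζ * t)
      = ∫ ζ : ℝ, h ζ * Complex.exp (-(Complex.I * ζ * t)) := by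
    rw [← integral_neg_eq_self]
    simp only [heven _, Complex.ofReal_neg, mul_neg, neg_mul]
  have hneg : Integrable fun ζ : ℝ => h ζ * Complex.exp (-(Complex.I * ζ * t)) := by
    simpa [hreflect, mul_neg, neg_mul] using (hh.mul_exp_I_mul (-t))
  refine mul_left_cancel₀ (two_ne_zero' ℂ) ?_
  calc 2 * ∫ ζ : ℝ, h ζ * Complex.exp (Complex.I * ζ * t)
      = ∫ ζ : ℝ, (h ζ * Complex.exp (Complex.I * ζ * t)
          + h ζ * Complex.exp (-(Complex.I * ζ * t))) := by
        rw [integral_add (hh.mul_exp_I_mul t) hneg, ← hreflect, two_mul]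
    _ = ∫ ζ : ℝ, 2 * (h ζ * Real.cos (ζ * t)) := by
        congr 1 with ζ
        rw [Complex.ofReal_cos, mul_left_comm, Complex.two_cos]
        push_cast
        ring_nf
    _ = 2 * ∫ ζ : ℝ, h ζ * Real.cos (ζ * t) := integral_const_mul _ _

theorem integral_mul_exp_I_mul_eq_integral_mul_cos_sub_one {h : ℝ → ℂ}
    (heven : Function.Even h) (hh : Integrable h) (hzero : ∫ ζ : ℝ, h ζ = 0) (t : ℝ) :
    ∫ ζ : ℝ, h ζ * Complex.exp (Complex.I * ζ * t)
      = ∫ ζ : ℝ, h ζ * ((Real.cos (ζ * t) - 1 : ℝ) : ℂ) := by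
  have hcos : Integrable fun ζ : ℝ => h ζ * Real.cos (ζ * t) :=
    hh.mul_bdd (c := 1) (by fun_prop) (ae_of_all _ fun ζ => by
      rw [Complex.norm_real, Real.norm_eq_abs]
      exact Real.abs_cos_le_one _)
  simp only [Complex.ofReal_sub, Complex.ofReal_one, mul_sub, mul_one]
  rw [integral_sub hcos hh, hzero, sub_zero,
    integral_mul_exp_I_mul_eq_integral_mul_cos heven hh]

theorem norm_integral_mul_cos_sub_one_le {h : ℝ → ℂ} {C : ℝ}
    (hbound : ∀ ζ, ‖h ζ‖ ≤ C / (1 + |ζ|) ^ 2) (t : ℝ) :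
    ‖∫ ζ : ℝ, h ζ * ((Real.cos (ζ * t) - 1 : ℝ) : ℂ)‖ ≤ 3 * Real.pi * C * |t| := by
  rcases eq_or_ne t 0 with rfl | ht
  · simp
  have hC : 0 ≤ C := by simpa using (norm_nonneg _).trans (hbound 0)
  have hpt : ∀ ζ, ‖h ζ * ((Real.cos (ζ * t) - 1 : ℝ) : ℂ)‖
      ≤ 3 * C * t ^ 2 * (1 + (ζ * t) ^ 2)⁻¹ := by
    intro ζ
    have hζ : ζ ^ 2 ≤ (1 + |ζ|) ^ 2 := by nlinarith [abs_nonneg ζ, sq_abs ζ]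
    rw [norm_mul, Complex.norm_real, Real.norm_eq_abs, abs_sub_comm,
      abs_of_nonneg (sub_nonneg.mpr (Real.cos_le_one _))]
    calc ‖h ζ‖ * (1 - Real.cos (ζ * t))
        ≤ C / (1 + |ζ|) ^ 2 * (3 * (ζ * t) ^ 2 / (1 + (ζ * t) ^ 2)) :=
          mul_le_mul (hbound ζ) (Real.one_sub_cos_le_three_mul_sq_div _)
            (sub_nonneg.mpr (Real.cos_le_one _)) (by positivity)
      _ = C * (ζ ^ 2 / (1 + |ζ|) ^ 2) * (3 * t ^ 2 * (1 + (ζ * t) ^ 2)⁻¹) := by ring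
      _ ≤ C * 1 * (3 * t ^ 2 * (1 + (ζ * t) ^ 2)⁻¹) := by
          gcongr
          exact div_le_one_of_le₀ hζ (by positivity)
      _ = 3 * C * t ^ 2 * (1 + (ζ * t) ^ 2)⁻¹ := by ring
  calc ‖∫ ζ : ℝ, h ζ * ((Real.cos (ζ * t) - 1 : ℝ) : ℂ)‖
      ≤ ∫ ζ : ℝ, 3 * C * t ^ 2 * (1 + (ζ * t) ^ 2)⁻¹ :=
        norm_integral_le_of_norm_le ((integrable_inv_one_add_sq.comp_mul_right' ht).const_mul _)
          (ae_of_all _ hpt)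
    _ = 3 * Real.pi * C * |t| := by
        rw [integral_const_mul, Real.integral_inv_one_add_sq_mul, ← sq_abs]
        field_simp [abs_ne_zero.mpr ht]

theorem stmt1 :
    ∃ C' : ℝ, 0 ≤ C' ∧ ∀ C : ℝ, 0 ≤ C → ∀ g : ℝ → ℂ,
      (∀ x : ℝ, g (-x) = g x) → ContDiff ℝ 2 g →
      (∀ ζ : ℝ, ‖deriv g ζ‖ ≤ C / (1 + |ζ|)) →
      (∀ ζ : ℝ, ‖deriv (deriv g) ζ‖ ≤ C / (1 + |ζ|) ^ 2) →
      (∀ t : ℝ, Integrable (fun ζ : ℝ => deriv (deriv g) ζ * Complex.exp (Complex.I * ζ * t))) ∧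
      (∫ ζ : ℝ, deriv (deriv g) ζ * Complex.exp (Complex.I * ζ * 0)) = 0 ∧
      ∀ t : ℝ, ‖∫ ζ : ℝ, deriv (deriv g) ζ * Complex.exp (Complex.I * ζ * t)‖ ≤ C' * C * |t| := by
  refine ⟨3 * Real.pi, by positivity, fun C _ g hg_even hg hg' hg'' => ?_⟩
  have hg'_C1 : ContDiff ℝ 1 (deriv g) := hg.deriv'
  have hint : Integrable (deriv (deriv g)) :=
    integrable_of_norm_le_div_one_add_abs_sq hg'_C1.continuous_deriv_one.aestronglyMeasurable hg''
  have hzero : ∫ ζ : ℝ, deriv (deriv g) ζ = 0 := by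
    have hlim := tendsto_cocompact_zero_of_norm_le_div_one_add_abs hg'
    simpa using integral_of_hasDerivAt_of_tendsto
      (fun x => (hg'_C1.differentiable one_ne_zero x).hasDerivAt) hint
      (hlim.mono_left atBot_le_cocompact) (hlim.mono_left atTop_le_cocompact)
  refine ⟨hint.mul_exp_I_mul, by simpa using hzero, fun t => ?_⟩
  have heven : Function.Even (deriv (deriv g)) := (Function.Even.deriv hg_even).deriv
  rw [integral_mul_exp_I_mul_eq_integral_mul_cos_sub_one heven hint hzero]
  exact norm_integral_mul_cos_sub_one_le hg'' t
end

section
/- Let (M,d) be a metric space in which every pair of points is joined by a minimizing geodesic, and let μ be a Borel measure on M such that every ball has finite positive measure, μ is locally doubling (for every s > 0 there exists D_s such that μ(B(x,2r)) ≤ D_s μ(B(x,r)) for all x ∈ M and 0 < r ≤ s), and M satisfies the uniform ball size condition (for every r > 0, inf_{x ∈ M} μ(B(x,r)) > 0 and sup_{x ∈ M} μ(B(x,r)) < ∞). Then there exists a constant C, depending only on (M,d,μ), such that for every H¹-atom a supported in a ball B of radius r_B > 1 one has ‖a‖_{H¹} ≤ C r_B, where ‖·‖_{H¹} is the atomic Hardy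 norm at scale 1. (This is Lemma 5.5 of the paper: the economical decomposition of atoms with large support.) -/
/-!
Cover the ball `B(x, r)` carrying the atom `a` by a maximal `1`-separated net `p₁, …, pₙ`.
Pushing each `pᵢ` along a geodesic towards `x` moves it by at most `1/4` and puts its
`1/4`-ball inside `B(x, r)`; these balls stay disjoint, so `n ≤ μ(B(x, r)) / c` with
`c = inf μ(B(·, 1/4))`. Split `a = ∑ 1_{Eᵢ} a` along the induced partition and write
`mᵢ = ∫_{Eᵢ} a`, `bₚ` for the normalized indicator of `B(p, 1/4)`. The functions
`1_{Eᵢ} a - mᵢ b_{pᵢ}` are multiples of unit-scale atoms whose coefficients add up to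
`≲ √n ‖a‖₂ + ‖a‖₁ ≲ 1`. Since `∑ mᵢ = 0`, what is left is `∑ mᵢ (b_{pᵢ} - bₓ)`, and each
`b_{pᵢ} - bₓ` telescopes along a geodesic into `⌈2r⌉` differences `b_{q'} - b_q` with
`d(q, q') ≤ 1/2`, each a multiple of a unit-scale atom; as `∑ |mᵢ| ≤ ‖a‖₁ ≤ 1`, this costs `O(r)`.
-/

open MeasureTheory Filter
open scoped ENNReal

noncomputable section

/-- An `H¹`-atom: a function in `L¹(μ) ∩ L²(μ)` supported in the ball `B(x,r)`, with vanishing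
integral and `‖a‖₂ ≤ μ(B(x,r))^{-1/2}`. -/
def IsH1Atom {M : Type*} [MetricSpace M] [MeasurableSpace M]
    (μ : Measure M) (a : M → ℂ) (x : M) (r : ℝ) : Prop :=
  Integrable a μ ∧ AEStronglyMeasurable a μ ∧
    eLpNorm a 2 μ ≤ μ (Metric.ball x r) ^ (-(1 / 2) : ℝ) ∧
    (∀ y, y ∉ Metric.ball x r → a y = 0) ∧ (∫ y, a y ∂μ) = 0

/-- The atomic Hardy norm at scale 1: the infimum of `Σ |λ_k|` over all decompositions
`g = Σ λ_k a_k` (convergence in `L¹(μ)`) into `H¹`-atoms supported in balls of radius at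
most 1.  The infimum of the empty set (in `ℝ≥0∞`) is `+∞`. -/
def hardyNorm1 {M : Type*} [MetricSpace M] [MeasurableSpace M]
    (μ : Measure M) (g : M → ℂ) : ℝ≥0∞ :=
  sInf { S : ℝ≥0∞ | ∃ (l : ℕ → ℝ) (A : ℕ → M → ℂ),
    (∀ n, ∃ x r, 0 < r ∧ r ≤ 1 ∧ IsH1Atom μ (A n) x r) ∧
    Summable (fun n => |l n|) ∧
    Tendsto (fun N => eLpNorm (fun y => g y - ∑ n ∈ Finset.range N, l n * A n y) 1 μ)
      atTop (nhds 0) ∧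
    S = ∑' n, ENNReal.ofReal |l n| }

open Metric Function

def IsGeodesicSpace (M : Type*) [PseudoMetricSpace M] : Prop :=
  ∀ x y : M, ∃ γ : ℝ → M, γ 0 = x ∧ γ (dist x y) = y ∧
    ∀ s ∈ Set.Icc (0 : ℝ) (dist x y), ∀ t ∈ Set.Icc (0 : ℝ) (dist x y),
      dist (γ s) (γ t) = |s - t|

namespace IsGeodesicSpace

variable {M : Type*} [PseudoMetricSpace M]

theorem exists_dist_eq (hM : IsGeodesicSpace M) (x y : M) {t : ℝ} (ht₀ : 0 ≤ t)
    (ht : t ≤ dist x y) : ∃ z, dist x z = t ∧ dist z y = dist x y - t := by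
  obtain ⟨γ, hγ₀, hγ₁, hγ⟩ := hM x y
  refine ⟨γ t, ?_, ?_⟩
  · rw [← hγ₀, hγ 0 ⟨le_rfl, dist_nonneg⟩ t ⟨ht₀, ht⟩, zero_sub, abs_neg, abs_of_nonneg ht₀]
  · conv_lhs => rw [← hγ₁]
    rw [hγ t ⟨ht₀, ht⟩ _ ⟨dist_nonneg, le_rfl⟩, abs_of_nonpos (by linarith), neg_sub]

theorem exists_ball_subset_ball_dist_le (hM : IsGeodesicSpace M) {x y : M} {r ρ : ℝ}
    (hρ : 0 ≤ ρ) (hρr : ρ ≤ r) (hy : y ∈ ball x r) :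
    ∃ z, ball z ρ ⊆ ball x r ∧ dist z y ≤ ρ := by
  have hxy : dist x y < r := mem_ball'.1 hy
  obtain ⟨z, hxz, hzy⟩ := hM.exists_dist_eq x y (t := min (dist x y) (r - ρ))
    (le_min dist_nonneg (by linarith)) (min_le_left _ _)
  refine ⟨z, ball_subset_ball' ?_, ?_⟩
  · rw [dist_comm, hxz]
    linarith [min_le_right (dist x y) (r - ρ)]
  · rw [hzy]
    rcases min_cases (dist x y) (r - ρ) with ⟨h, -⟩ | ⟨h, -⟩ <;> rw [h] <;> linarith

theorem exists_chain (hM : IsGeodesicSpace M) (x y : M) {K : ℕ} (hK : 0 < K) :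
    ∃ q : ℕ → M, q 0 = x ∧ q K = y ∧ ∀ j < K, dist (q j) (q (j + 1)) = dist x y / K := by
  obtain ⟨γ, hγ₀, hγ₁, hγ⟩ := hM x y
  have hKpos : (0 : ℝ) < K := Nat.cast_pos.2 hK
  have hmem : ∀ j ≤ K, (j : ℝ) * (dist x y / K) ∈ Set.Icc 0 (dist x y) := fun j hj =>
    ⟨by positivity, by
      rw [mul_div_assoc', div_le_iff₀ hKpos, mul_comm]
      exact mul_le_mul_of_nonneg_left (Nat.cast_le.2 hj) dist_nonneg⟩
  refine ⟨fun j => γ (j * (dist x y / K)), by simpa using hγ₀, ?_, fun j hj => ?_⟩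
  · simpa [mul_div_cancel₀ _ hKpos.ne'] using hγ₁
  · rw [hγ _ (hmem j hj.le) _ (hmem (j + 1) hj), Nat.cast_succ, ← sub_mul, sub_add_cancel_left,
      neg_one_mul, abs_neg, abs_of_nonneg (by positivity)]

theorem card_mul_le_measure_ball [MeasurableSpace M] [OpensMeasurableSpace M] (μ : Measure M)
    (hM : IsGeodesicSpace M) {c : ℝ≥0∞} {ρ δ r : ℝ} (hρ : 0 ≤ ρ) (hρδ : 4 * ρ ≤ δ)
    (hρr : ρ ≤ r) (hc : ∀ p, c ≤ μ (ball p ρ)) {x : M} (T : Finset M) (hT : ↑T ⊆ ball x r)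
    (hsep : (T : Set M).Pairwise fun p q => δ ≤ dist p q) : T.card * c ≤ μ (ball x r) := by
  choose! z hzB hzd using fun p (hp : p ∈ T) =>
    hM.exists_ball_subset_ball_dist_le hρ hρr (hT hp)
  have hdisj : (T : Set M).PairwiseDisjoint fun p => ball (z p) ρ := by
    intro p hp q hq hpq
    refine ball_disjoint_ball ?_
    have := dist_triangle4 p (z p) (z q) q
    rw [dist_comm p (z p)] at this
    linarith [hsep hp hq hpq, hzd p hp, hzd q hq]
  calc (T.card : ℝ≥0∞) * c = ∑ p ∈ T, c := by rw [Finset.sum_const, nsmul_eq_mul]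
    _ ≤ ∑ p ∈ T, μ (ball (z p) ρ) := Finset.sum_le_sum fun p _ => hc (z p)
    _ = μ (⋃ p ∈ T, ball (z p) ρ) :=
      (measure_biUnion_finset hdisj fun _ _ => measurableSet_ball).symm
    _ ≤ μ (ball x r) := measure_mono (Set.iUnion₂_subset hzB)

end IsGeodesicSpace

theorem exists_finset_pairwise_le_dist_subset_iUnion_ball {M : Type*} [PseudoMetricSpace M]
    {s : Set M} {δ : ℝ} (hδ : 0 < δ) {N : ℕ}
    (hN : ∀ T : Finset M, ↑T ⊆ s → (T : Set M).Pairwise (fun p q => δ ≤ dist p q) → T.card ≤ N) :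
    ∃ S : Finset M, ↑S ⊆ s ∧ (S : Set M).Pairwise (fun p q => δ ≤ dist p q) ∧
      s ⊆ ⋃ p ∈ S, ball p δ := by
  classical
  by_contra! h
  have hgrow : ∀ k, ∃ T : Finset M, ↑T ⊆ s ∧
      (T : Set M).Pairwise (fun p q => δ ≤ dist p q) ∧ T.card = k := by
    intro k
    induction k with
    | zero => exact ⟨∅, by simp, by simp, rfl⟩
    | succ k ih =>
      obtain ⟨T, hTs, hTsep, rfl⟩ := ih
      obtain ⟨y, hys, hy⟩ := Set.not_subset.1 (h T hTs hTsep)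
      have hfar : ∀ p ∈ T, δ ≤ dist y p := fun p hp =>
        not_lt.1 fun hlt => hy (Set.mem_biUnion hp (mem_ball.2 hlt))
      have hyT : y ∉ T := fun hyT => by simpa using (hfar y hyT).trans_lt' hδ
      refine ⟨insert y T, ?_, ?_, Finset.card_insert_of_notMem hyT⟩
      · rw [Finset.coe_insert]
        exact Set.insert_subset hys hTs
      · rw [Finset.coe_insert]
        exact hTsep.insert fun p hp _ => ⟨hfar p hp, dist_comm y p ▸ hfar p hp⟩
  obtain ⟨T, hTs, hTsep, hcard⟩ := hgrow (N + 1)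
  have := hN T hTs hTsep
  omega

theorem IsGeodesicSpace.exists_partition_ball {M : Type*} [PseudoMetricSpace M]
    [MeasurableSpace M] [OpensMeasurableSpace M] (μ : Measure M) (hM : IsGeodesicSpace M)
    {c : ℝ≥0∞} (hc : ∀ p, c ≤ μ (ball p (1 / 4))) (hc₀ : c ≠ 0) {x : M} {r : ℝ}
    (hr : 1 / 4 ≤ r) (hB : μ (ball x r) ≠ ⊤) :
    ∃ (n : ℕ) (P : Fin n → M) (E : Fin n → Set M), (∀ i, P i ∈ ball x r) ∧
      (n : ℝ≥0∞) * c ≤ μ (ball x r) ∧ (∀ i, MeasurableSet (E i)) ∧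
      Pairwise (Disjoint on E) ∧ (∀ i, E i ⊆ ball (P i) 1) ∧ ⋃ i, E i = ball x r := by
  have hcard : ∀ T : Finset M, ↑T ⊆ ball x r → (T : Set M).Pairwise (fun p q => 1 ≤ dist p q) →
      (T.card : ℝ≥0∞) * c ≤ μ (ball x r) :=
    hM.card_mul_le_measure_ball μ (by norm_num) (by norm_num) hr hc
  obtain ⟨S, hSB, hSsep, hScover⟩ := exists_finset_pairwise_le_dist_subset_iUnion_ball one_pos
    (N := ⌊(μ (ball x r) / c).toReal⌋₊) fun T hTB hTsep => by
      refine Nat.le_floor ?_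
      rw [← ENNReal.toReal_natCast]
      refine ENNReal.toReal_mono (ENNReal.div_ne_top hB hc₀) ?_
      exact (ENNReal.le_div_iff_mul_le (Or.inl hc₀) (Or.inr hB)).2 (hcard T hTB hTsep)
  set P : Fin S.card → M := fun i => S.equivFin.symm i
  have hcover : ball x r ⊆ ⋃ i, ball (P i) 1 := by
    intro y hy
    obtain ⟨p, hp, hyp⟩ := Set.mem_iUnion₂.1 (hScover hy)
    exact Set.mem_iUnion.2 ⟨S.equivFin ⟨p, hp⟩, by simpa [P] using hyp⟩
  refine ⟨S.card, P, disjointed fun i => ball x r ∩ ball (P i) 1,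
    fun i => hSB (S.equivFin.symm i).2, hcard S hSB hSsep,
    fun i => disjointedRec (fun _ _ ht => ht.diff (measurableSet_ball.inter measurableSet_ball))
      (measurableSet_ball.inter measurableSet_ball), disjoint_disjointed _,
    fun i => (disjointed_subset _ i).trans Set.inter_subset_right, ?_⟩
  rw [iUnion_disjointed, ← Set.inter_iUnion, Set.inter_eq_left.2 hcover]

section AtomicSums

variable {M : Type*} [MetricSpace M] [MeasurableSpace M] {μ : Measure M}

theorem IsH1Atom.zero (μ : Measure M) (x : M) (r : ℝ) : IsH1Atom μ 0 x r :=
  ⟨integrable_zero _ _ _, aestronglyMeasurable_zero, by simp, fun _ _ => rfl, by simp⟩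

theorem exists_isH1Atom_of_eLpNorm_le {f : M → ℂ} {x : M} {r c : ℝ} (hc : 0 ≤ c)
    (hf : Integrable f μ) (hsupp : ∀ y, y ∉ ball x r → f y = 0) (hmean : ∫ y, f y ∂μ = 0)
    (hnorm : eLpNorm f 2 μ ≤ ENNReal.ofReal c * μ (ball x r) ^ (-(1 / 2) : ℝ)) :
    ∃ A : M → ℂ, IsH1Atom μ A x r ∧ f =ᵐ[μ] fun y => (c : ℂ) * A y := by
  rcases hc.eq_or_lt with rfl | hc
  · refine ⟨0, IsH1Atom.zero μ x r, ?_⟩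
    have : eLpNorm f 2 μ = 0 := by simpa using hnorm
    filter_upwards [(eLpNorm_eq_zero_iff hf.1 two_ne_zero).1 this] with y hy
    simp [hy]
  refine ⟨(c : ℂ)⁻¹ • f, ⟨hf.smul _, hf.1.const_smul _, ?_, fun y hy => by simp [hsupp y hy],
    by simp only [Pi.smul_apply]; rw [integral_smul, hmean, smul_zero]⟩, .of_forall fun y => ?_⟩
  · have hcne : ENNReal.ofReal c ≠ 0 := ENNReal.ofReal_pos.2 hc |>.ne'
    rw [eLpNorm_const_smul, enorm_inv (by exact_mod_cast hc.ne'), ← ofReal_norm,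
      Complex.norm_real, Real.norm_of_nonneg hc.le,
      ENNReal.inv_mul_le_iff hcne ENNReal.ofReal_ne_top]
    exact hnorm
  · simp [hc.ne']

-- Finite decompositions concatenate without any bookkeeping of convergence in `L¹`.
def IsFiniteAtomicSum (μ : Measure M) (g : M → ℂ) (C : ℝ≥0∞) : Prop :=
  ∃ (n : ℕ) (l : Fin n → ℝ) (A : Fin n → M → ℂ),
    (∀ k, ∃ x r, 0 < r ∧ r ≤ 1 ∧ IsH1Atom μ (A k) x r) ∧
    (g =ᵐ[μ] fun y => ∑ k, (l k : ℂ) * A k y) ∧ ∑ k, ENNReal.ofReal |l k| ≤ C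

namespace IsFiniteAtomicSum

theorem mono {g : M → ℂ} {C D : ℝ≥0∞} (hg : IsFiniteAtomicSum μ g C) (hCD : C ≤ D) :
    IsFiniteAtomicSum μ g D :=
  let ⟨n, l, A, hA, hgA, hl⟩ := hg
  ⟨n, l, A, hA, hgA, hl.trans hCD⟩

theorem add {g h : M → ℂ} {C D : ℝ≥0∞} (hg : IsFiniteAtomicSum μ g C)
    (hh : IsFiniteAtomicSum μ h D) : IsFiniteAtomicSum μ (g + h) (C + D) := by
  obtain ⟨n, l, A, hA, hgA, hl⟩ := hg
  obtain ⟨n', l', A', hA', hhA', hl'⟩ := hh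
  refine ⟨n + n', Fin.append l l', Fin.append A A', Fin.addCases (by simpa using hA)
    (by simpa using hA'), ?_, by simpa [Fin.sum_univ_add] using add_le_add hl hl'⟩
  filter_upwards [hgA, hhA'] with y hy hy'
  simp [Fin.sum_univ_add, hy, hy']

theorem zero (μ : Measure M) : IsFiniteAtomicSum μ 0 0 :=
  ⟨0, Fin.elim0, Fin.elim0, fun k => k.elim0, .of_forall fun _ => by simp, by simp⟩

theorem sum {ι : Type*} (s : Finset ι) {g : ι → M → ℂ} {C : ι → ℝ≥0∞}
    (hg : ∀ i ∈ s, IsFiniteAtomicSum μ (g i) (C i)) :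
    IsFiniteAtomicSum μ (∑ i ∈ s, g i) (∑ i ∈ s, C i) := by
  classical
  induction s using Finset.induction_on with
  | empty => simpa using zero μ
  | insert i s hi ih =>
    rw [Finset.sum_insert hi, Finset.sum_insert hi]
    exact (hg i (s.mem_insert_self i)).add (ih fun j hj => hg j (Finset.mem_insert_of_mem hj))

theorem hardyNorm1_le [Nonempty M] {g : M → ℂ} {C : ℝ≥0∞} (hg : IsFiniteAtomicSum μ g C) :
    hardyNorm1 μ g ≤ C := by
  obtain ⟨n, l, A, hA, hgA, hl⟩ := hg
  set l' : ℕ → ℝ := fun k => if h : k < n then l ⟨k, h⟩ else 0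
  set A' : ℕ → M → ℂ := fun k => if h : k < n then A ⟨k, h⟩ else 0
  have hsum : ∀ N ≥ n, ∀ y, ∑ k ∈ Finset.range N, (l' k : ℂ) * A' k y = ∑ k, (l k : ℂ) * A k y := by
    intro N hN y
    rw [Finset.sum_fin_eq_sum_range, ← Finset.sum_range_add_sum_Ico _ hN,
      Finset.sum_eq_zero (s := Finset.Ico n N) fun k hk => by
        simp [l', (Finset.mem_Ico.1 hk).1.not_gt], add_zero]
    refine Finset.sum_congr rfl fun k hk => ?_
    simp [l', A', Finset.mem_range.1 hk]
  refine le_trans (sInf_le ⟨l', A', fun k => ?_, ?_, ?_, rfl⟩) ?_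
  · by_cases hk : k < n
    · simpa [A', hk] using hA ⟨k, hk⟩
    · exact ⟨Classical.arbitrary M, 1, one_pos, le_rfl, by simpa [A', hk] using IsH1Atom.zero μ _ _⟩
  · refine summable_of_ne_finset_zero (s := Finset.range n) fun k hk => ?_
    simp [l', Finset.mem_range.not.1 hk]
  · refine tendsto_const_nhds.congr' ?_
    filter_upwards [eventually_ge_atTop n] with N hN
    have hzero : (fun y => g y - ∑ k ∈ Finset.range N, (l' k : ℂ) * A' k y) =ᵐ[μ] 0 := by
      filter_upwards [hgA] with y hy
      simp [hy, hsum N hN y]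
    rw [eLpNorm_congr_ae hzero, eLpNorm_zero]
  · rw [tsum_eq_sum (s := Finset.range n) fun k hk => by simp [l', Finset.mem_range.not.1 hk]]
    refine le_of_eq_of_le ?_ hl
    rw [Finset.sum_fin_eq_sum_range]
    refine Finset.sum_congr rfl fun k hk => ?_
    simp [l', Finset.mem_range.1 hk]

theorem of_eLpNorm_le {f : M → ℂ} {p : M} {ρ : ℝ} (hρ : 0 < ρ) (hρ₁ : ρ ≤ 1) {C V : ℝ≥0∞}
    (hf : Integrable f μ) (hsupp : ∀ y, y ∉ ball p ρ → f y = 0) (hmean : ∫ y, f y ∂μ = 0)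
    (hnorm : eLpNorm f 2 μ ≤ C) (hC : C ≠ ⊤) (hB₀ : μ (ball p ρ) ≠ 0) (hBV : μ (ball p ρ) ≤ V)
    (hV : V ≠ ⊤) : IsFiniteAtomicSum μ f (V ^ (1 / 2 : ℝ) * C) := by
  have hD : V ^ (1 / 2 : ℝ) * C ≠ ⊤ :=
    ENNReal.mul_ne_top (ENNReal.rpow_ne_top_of_nonneg (by norm_num) hV) hC
  have hone : 1 ≤ V ^ (1 / 2 : ℝ) * μ (ball p ρ) ^ (-(1 / 2) : ℝ) :=
    calc 1 = μ (ball p ρ) ^ (1 / 2 : ℝ) * μ (ball p ρ) ^ (-(1 / 2) : ℝ) := by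
          rw [← ENNReal.rpow_add _ _ hB₀ (ne_top_of_le_ne_top hV hBV)]; norm_num
      _ ≤ V ^ (1 / 2 : ℝ) * μ (ball p ρ) ^ (-(1 / 2) : ℝ) := by gcongr
  obtain ⟨A, hA, hfA⟩ := exists_isH1Atom_of_eLpNorm_le ENNReal.toReal_nonneg hf hsupp hmean
    (c := (V ^ (1 / 2 : ℝ) * C).toReal) <| by
      rw [ENNReal.ofReal_toReal hD]
      calc eLpNorm f 2 μ ≤ C * 1 := by rwa [mul_one]
        _ ≤ C * (V ^ (1 / 2 : ℝ) * μ (ball p ρ) ^ (-(1 / 2) : ℝ)) := by gcongr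
        _ = V ^ (1 / 2 : ℝ) * C * μ (ball p ρ) ^ (-(1 / 2) : ℝ) := by ring
  refine ⟨1, fun _ => (V ^ (1 / 2 : ℝ) * C).toReal, fun _ => A,
    fun _ => ⟨p, ρ, hρ, hρ₁, hA⟩, by simpa using hfA, ?_⟩
  rw [Fin.sum_univ_one, abs_of_nonneg ENNReal.toReal_nonneg, ENNReal.ofReal_toReal hD]

end IsFiniteAtomicSum

end AtomicSums

section Estimates

variable {M : Type*} [MeasurableSpace M] {μ : Measure M}

def normalizedIndicator (μ : Measure M) (s : Set M) : M → ℂ :=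
  s.indicator fun _ => ((μ.real s : ℂ))⁻¹

variable {s : Set M}

theorem normalizedIndicator_of_notMem {y : M} (hy : y ∉ s) : normalizedIndicator μ s y = 0 :=
  Set.indicator_of_notMem hy _

theorem integrable_normalizedIndicator (hs : MeasurableSet s) (hμs : μ s ≠ ⊤) :
    Integrable (normalizedIndicator μ s) μ :=
  (integrable_indicator_iff hs).2 (integrableOn_const hμs)

theorem integral_normalizedIndicator (hs : MeasurableSet s) (h₀ : μ s ≠ 0) (hμs : μ s ≠ ⊤) :
    ∫ y, normalizedIndicator μ s y ∂μ = 1 := by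
  rw [normalizedIndicator, integral_indicator_const _ hs, Complex.real_smul, mul_inv_cancel₀]
  exact_mod_cast (ENNReal.toReal_pos h₀ hμs).ne'

theorem eLpNorm_normalizedIndicator (hs : MeasurableSet s) (h₀ : μ s ≠ 0) (hμs : μ s ≠ ⊤) :
    eLpNorm (normalizedIndicator μ s) 2 μ = μ s ^ (-(1 / 2) : ℝ) := by
  rw [normalizedIndicator, eLpNorm_indicator_const hs two_ne_zero ENNReal.ofNat_ne_top,
    enorm_inv (by exact_mod_cast (ENNReal.toReal_pos h₀ hμs).ne'), ← ofReal_norm,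
    Complex.norm_real, Real.norm_of_nonneg measureReal_nonneg, measureReal_def,
    ENNReal.ofReal_toReal hμs, ← ENNReal.rpow_neg_one, ← ENNReal.rpow_add _ _ h₀ hμs]
  norm_num

variable {F : Type*} [NormedAddCommGroup F]

theorem eLpNorm_one_le_eLpNorm_two_mul_of_support_subset {f : M → F}
    (hf : AEStronglyMeasurable f μ) (hs : Function.support f ⊆ s) :
    eLpNorm f 1 μ ≤ eLpNorm f 2 μ * μ s ^ (1 / 2 : ℝ) := by
  rw [← eLpNorm_restrict_eq_of_support_subset hs,
    ← eLpNorm_restrict_eq_of_support_subset (p := 2) hs]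
  have := eLpNorm_le_eLpNorm_mul_rpow_measure_univ one_le_two hf.restrict (μ := μ.restrict s)
  rw [Measure.restrict_apply_univ] at this
  convert this using 3
  norm_num

variable {ι : Type*} [Fintype ι] {E : ι → Set M}

theorem sum_enorm_setIntegral_le [NormedSpace ℝ F] (hE : ∀ i, MeasurableSet (E i))
    (hdisj : Pairwise (Disjoint on E)) (f : M → F) :
    ∑ i, ‖∫ y in E i, f y ∂μ‖ₑ ≤ eLpNorm f 1 μ :=
  calc ∑ i, ‖∫ y in E i, f y ∂μ‖ₑ ≤ ∑ i, ∫⁻ y in E i, ‖f y‖ₑ ∂μ :=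
        Finset.sum_le_sum fun i _ => enorm_integral_le_lintegral_enorm _
    _ = ∫⁻ y in ⋃ i, E i, ‖f y‖ₑ ∂μ := by rw [lintegral_iUnion hE hdisj, tsum_fintype]
    _ ≤ ∫⁻ y, ‖f y‖ₑ ∂μ := setLIntegral_le_lintegral _ _
    _ = eLpNorm f 1 μ := eLpNorm_one_eq_lintegral_enorm.symm

theorem sum_eLpNorm_indicator_le (hE : ∀ i, MeasurableSet (E i))
    (hdisj : Pairwise (Disjoint on E)) (f : M → F) :
    ∑ i, eLpNorm ((E i).indicator f) 2 μ ≤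
      (Fintype.card ι : ℝ≥0∞) ^ (1 / 2 : ℝ) * eLpNorm f 2 μ := by
  have hsq : ∀ ν : Measure M, eLpNorm f 2 ν ^ (2 : ℝ) = ∫⁻ y, ‖f y‖ₑ ^ (2 : ℝ) ∂ν := fun ν => by
    simpa using eLpNorm_nnreal_pow_eq_lintegral (f := f) (μ := ν) (p := 2) two_ne_zero
  have hpieces : ∑ i, eLpNorm ((E i).indicator f) 2 μ ^ (2 : ℝ) ≤ eLpNorm f 2 μ ^ (2 : ℝ) :=
    calc ∑ i, eLpNorm ((E i).indicator f) 2 μ ^ (2 : ℝ)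
        = ∫⁻ y in ⋃ i, E i, ‖f y‖ₑ ^ (2 : ℝ) ∂μ := by
          simp_rw [eLpNorm_indicator_eq_eLpNorm_restrict (hE _), hsq]
          rw [lintegral_iUnion hE hdisj, tsum_fintype]
      _ ≤ eLpNorm f 2 μ ^ (2 : ℝ) := by rw [hsq]; exact setLIntegral_le_lintegral _ _
  calc ∑ i, eLpNorm ((E i).indicator f) 2 μ = ∑ i, eLpNorm ((E i).indicator f) 2 μ * 1 := by
        simp
    _ ≤ (∑ i, eLpNorm ((E i).indicator f) 2 μ ^ (2 : ℝ)) ^ (1 / 2 : ℝ) *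
          (∑ _i : ι, (1 : ℝ≥0∞) ^ (2 : ℝ)) ^ (1 / 2 : ℝ) :=
        ENNReal.inner_le_Lp_mul_Lq _ _ _ Real.HolderConjugate.two_two
    _ ≤ (eLpNorm f 2 μ ^ (2 : ℝ)) ^ (1 / 2 : ℝ) * (Fintype.card ι : ℝ≥0∞) ^ (1 / 2 : ℝ) := by
        gcongr
        simp
    _ = (Fintype.card ι : ℝ≥0∞) ^ (1 / 2 : ℝ) * eLpNorm f 2 μ := by
        rw [← ENNReal.rpow_mul, mul_comm]
        norm_num

end Estimates

theorem ENNReal.rpow_half_mul_rpow_neg_half_le_one (x : ℝ≥0∞) :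
    x ^ (1 / 2 : ℝ) * x ^ (-(1 / 2) : ℝ) ≤ 1 := by
  rcases eq_or_ne x 0 with rfl | h₀
  · simp
  rcases eq_or_ne x ⊤ with rfl | hx
  · simp
  rw [← ENNReal.rpow_add _ _ h₀ hx]
  norm_num

section

variable {M : Type*} [MetricSpace M] [MeasurableSpace M] {μ : Measure M}

structure UniformBallBounds (μ : Measure M) (V c : ℝ≥0∞) : Prop where
  measure_ball_le : ∀ p, μ (ball p 1) ≤ V
  ne_top : V ≠ ⊤
  le_measure_ball : ∀ p, c ≤ μ (ball p (1 / 4))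
  ne_zero : c ≠ 0

namespace UniformBallBounds

variable {V c : ℝ≥0∞} (h : UniformBallBounds μ V c)
include h

theorem measure_ball_quarter_ne_zero (p : M) : μ (ball p (1 / 4)) ≠ 0 :=
  ne_bot_of_le_ne_bot h.ne_zero (h.le_measure_ball p)

theorem measure_ball_one_ne_zero (p : M) : μ (ball p 1) ≠ 0 :=
  ne_bot_of_le_ne_bot (h.measure_ball_quarter_ne_zero p)
    (measure_mono (ball_subset_ball (by norm_num)))

theorem measure_ball_quarter_ne_top (p : M) : μ (ball p (1 / 4)) ≠ ⊤ :=
  ne_top_of_le_ne_top h.ne_top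
    ((measure_mono (ball_subset_ball (by norm_num))).trans (h.measure_ball_le p))

theorem rpow_neg_half_ne_top : c ^ (-(1 / 2) : ℝ) ≠ ⊤ := by
  simp [ENNReal.rpow_eq_top_iff, h.ne_zero]

variable [OpensMeasurableSpace M]

theorem integrable_normalizedIndicator_ball (p : M) :
    Integrable (normalizedIndicator μ (ball p (1 / 4))) μ :=
  integrable_normalizedIndicator measurableSet_ball (h.measure_ball_quarter_ne_top p)

theorem integral_normalizedIndicator_ball (p : M) :
    ∫ y, normalizedIndicator μ (ball p (1 / 4)) y ∂μ = 1 :=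
  integral_normalizedIndicator measurableSet_ball (h.measure_ball_quarter_ne_zero p)
    (h.measure_ball_quarter_ne_top p)

theorem eLpNorm_normalizedIndicator_ball_le (p : M) :
    eLpNorm (normalizedIndicator μ (ball p (1 / 4))) 2 μ ≤ c ^ (-(1 / 2) : ℝ) := by
  rw [eLpNorm_normalizedIndicator measurableSet_ball (h.measure_ball_quarter_ne_zero p)
    (h.measure_ball_quarter_ne_top p), ENNReal.rpow_neg, ENNReal.rpow_neg]
  gcongr
  exact h.le_measure_ball p

theorem isFiniteAtomicSum_indicator_sub {a : M → ℂ} (ha : Integrable a μ)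
    (ha₂ : eLpNorm a 2 μ ≠ ⊤) {E : Set M} (hE : MeasurableSet E) {p : M} (hEp : E ⊆ ball p 1) :
    IsFiniteAtomicSum μ
      (E.indicator a - (∫ y in E, a y ∂μ) • normalizedIndicator μ (ball p (1 / 4)))
      (V ^ (1 / 2 : ℝ) * (eLpNorm (E.indicator a) 2 μ +
        ‖∫ y in E, a y ∂μ‖ₑ * c ^ (-(1 / 2) : ℝ))) := by
  have hb := h.integrable_normalizedIndicator_ball p
  refine IsFiniteAtomicSum.of_eLpNorm_le one_pos le_rfl ((ha.indicator hE).sub (hb.smul _))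
    (fun y hy => ?_) ?_ ?_ ?_ (h.measure_ball_one_ne_zero p) (h.measure_ball_le p) h.ne_top
  · have hyq : y ∉ ball p (1 / 4) := fun hy' => hy (ball_subset_ball (by norm_num) hy')
    simp only [Pi.sub_apply, Pi.smul_apply, Set.indicator_of_notMem (fun hyE => hy (hEp hyE)),
      normalizedIndicator_of_notMem hyq, smul_zero, sub_zero]
  · rw [integral_sub' (ha.indicator hE) (hb.smul _), integral_indicator hE]
    simp only [Pi.smul_apply]
    rw [integral_smul,
      h.integral_normalizedIndicator_ball, smul_eq_mul, mul_one, sub_self]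
  · refine (eLpNorm_sub_le (ha.1.indicator hE) (hb.1.const_smul _) one_le_two).trans ?_
    rw [eLpNorm_const_smul]
    gcongr
    exact h.eLpNorm_normalizedIndicator_ball_le p
  · exact ENNReal.add_ne_top.2 ⟨ne_top_of_le_ne_top ha₂ (eLpNorm_indicator_le a),
      ENNReal.mul_ne_top enorm_ne_top h.rpow_neg_half_ne_top⟩

theorem isFiniteAtomicSum_smul_sub_of_dist_le (z : ℂ) {p q : M} (hpq : dist p q ≤ 1 / 2) :
    IsFiniteAtomicSum μ
      (z • (normalizedIndicator μ (ball p (1 / 4)) - normalizedIndicator μ (ball q (1 / 4))))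
      (V ^ (1 / 2 : ℝ) * (‖z‖ₑ * (2 * c ^ (-(1 / 2) : ℝ)))) := by
  have hp := h.integrable_normalizedIndicator_ball p
  have hq := h.integrable_normalizedIndicator_ball q
  refine IsFiniteAtomicSum.of_eLpNorm_le one_pos le_rfl ((hp.sub hq).smul z)
    (fun y hy => ?_) ?_ ?_ ?_ (h.measure_ball_one_ne_zero q) (h.measure_ball_le q) h.ne_top
  · have hyp : y ∉ ball p (1 / 4) := fun hy' =>
      hy (ball_subset_ball' (by linarith) hy')
    have hyq : y ∉ ball q (1 / 4) := fun hy' => hy (ball_subset_ball (by norm_num) hy')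
    simp only [Pi.smul_apply, Pi.sub_apply, normalizedIndicator_of_notMem hyp,
      normalizedIndicator_of_notMem hyq, sub_zero, smul_zero]
  · simp only [Pi.smul_apply, Pi.sub_apply]
    rw [integral_smul, integral_sub hp hq, h.integral_normalizedIndicator_ball,
      h.integral_normalizedIndicator_ball, sub_self, smul_zero]
  · rw [eLpNorm_const_smul, two_mul]
    gcongr
    exact (eLpNorm_sub_le hp.1 hq.1 one_le_two).trans (add_le_add
      (h.eLpNorm_normalizedIndicator_ball_le p) (h.eLpNorm_normalizedIndicator_ball_le q))
  · exact ENNReal.mul_ne_top enorm_ne_top (ENNReal.mul_ne_top (by norm_num) h.rpow_neg_half_ne_top)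

theorem isFiniteAtomicSum_smul_sub (hM : IsGeodesicSpace M) (z : ℂ) {p q : M} {K : ℕ}
    (hK : 0 < K) (hpq : dist q p ≤ K / 2) :
    IsFiniteAtomicSum μ
      (z • (normalizedIndicator μ (ball p (1 / 4)) - normalizedIndicator μ (ball q (1 / 4))))
      (K * (V ^ (1 / 2 : ℝ) * (‖z‖ₑ * (2 * c ^ (-(1 / 2) : ℝ))))) := by
  obtain ⟨w, hw₀, hwK, hw⟩ := hM.exists_chain q p hK
  have hstep : ∀ j < K, dist (w (j + 1)) (w j) ≤ 1 / 2 := fun j hj => by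
    rw [dist_comm, hw j hj, div_le_iff₀ (Nat.cast_pos.2 hK)]
    linarith
  have htelescope : z • (normalizedIndicator μ (ball p (1 / 4)) -
      normalizedIndicator μ (ball q (1 / 4))) = ∑ j ∈ Finset.range K,
        z • (normalizedIndicator μ (ball (w (j + 1)) (1 / 4)) -
          normalizedIndicator μ (ball (w j) (1 / 4))) := by
    rw [← Finset.smul_sum,
      Finset.sum_range_sub (fun j => normalizedIndicator μ (ball (w j) (1 / 4))), hwK, hw₀]
  rw [htelescope]
  simpa using IsFiniteAtomicSum.sum (Finset.range K) fun j hj =>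
    h.isFiniteAtomicSum_smul_sub_of_dist_le z (hstep j (Finset.mem_range.1 hj))

end UniformBallBounds

end

namespace IsH1Atom

variable {M : Type*} [MetricSpace M] [MeasurableSpace M] {μ : Measure M} {a : M → ℂ} {x : M}
  {r : ℝ} {ι : Type*} [Fintype ι] {E : ι → Set M}

theorem support_subset (ha : IsH1Atom μ a x r) : Function.support a ⊆ ball x r :=
  fun y hy => by_contra fun h => hy (ha.2.2.2.1 y h)

theorem eLpNorm_ne_top (ha : IsH1Atom μ a x r) (hB : μ (ball x r) ≠ 0) : eLpNorm a 2 μ ≠ ⊤ :=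
  ne_top_of_le_ne_top (by simp [ENNReal.rpow_eq_top_iff, hB]) ha.2.2.1

theorem sum_enorm_setIntegral_le_one (ha : IsH1Atom μ a x r) (hE : ∀ i, MeasurableSet (E i))
    (hdisj : Pairwise (Disjoint on E)) : ∑ i, ‖∫ y in E i, a y ∂μ‖ₑ ≤ 1 :=
  calc ∑ i, ‖∫ y in E i, a y ∂μ‖ₑ ≤ eLpNorm a 1 μ := sum_enorm_setIntegral_le hE hdisj a
    _ ≤ eLpNorm a 2 μ * μ (ball x r) ^ (1 / 2 : ℝ) :=
      eLpNorm_one_le_eLpNorm_two_mul_of_support_subset ha.2.1 ha.support_subset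
    _ ≤ μ (ball x r) ^ (1 / 2 : ℝ) * μ (ball x r) ^ (-(1 / 2) : ℝ) := by
      rw [mul_comm]
      gcongr
      exact ha.2.2.1
    _ ≤ 1 := ENNReal.rpow_half_mul_rpow_neg_half_le_one _

theorem sum_eLpNorm_indicator_le (ha : IsH1Atom μ a x r) (hE : ∀ i, MeasurableSet (E i))
    (hdisj : Pairwise (Disjoint on E)) {c : ℝ≥0∞} (hc : c ≠ 0) (hB : μ (ball x r) ≠ ⊤)
    (hcard : (Fintype.card ι : ℝ≥0∞) * c ≤ μ (ball x r)) :
    ∑ i, eLpNorm ((E i).indicator a) 2 μ ≤ c ^ (-(1 / 2) : ℝ) :=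
  calc ∑ i, eLpNorm ((E i).indicator a) 2 μ
      ≤ (Fintype.card ι : ℝ≥0∞) ^ (1 / 2 : ℝ) * eLpNorm a 2 μ :=
        _root_.sum_eLpNorm_indicator_le hE hdisj a
    _ ≤ (μ (ball x r) / c) ^ (1 / 2 : ℝ) * μ (ball x r) ^ (-(1 / 2) : ℝ) := by
      gcongr
      · exact (ENNReal.le_div_iff_mul_le (Or.inl hc) (Or.inr hB)).2 hcard
      · exact ha.2.2.1
    _ = c ^ (-(1 / 2) : ℝ) * (μ (ball x r) ^ (1 / 2 : ℝ) * μ (ball x r) ^ (-(1 / 2) : ℝ)) := by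
      rw [div_eq_mul_inv, ENNReal.mul_rpow_of_nonneg _ _ (by norm_num), ENNReal.inv_rpow,
        ← ENNReal.rpow_neg]
      ring
    _ ≤ c ^ (-(1 / 2) : ℝ) := mul_le_of_le_one_right' (ENNReal.rpow_half_mul_rpow_neg_half_le_one _)

theorem eq_sum_sub_add_sum_smul_sub (ha : IsH1Atom μ a x r) (hE : ∀ i, MeasurableSet (E i))
    (hdisj : Pairwise (Disjoint on E)) (hEU : ⋃ i, E i = ball x r) (b : ι → M → ℂ)
    (b₀ : M → ℂ) :
    a = ∑ i, ((E i).indicator a - (∫ y in E i, a y ∂μ) • b i) +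
      ∑ i, (∫ y in E i, a y ∂μ) • (b i - b₀) := by
  have hind : ∑ i, (E i).indicator a = a := by
    have := Finset.indicator_biUnion Finset.univ E (f := a) fun i _ j _ hij => hdisj hij
    simp only [Finset.mem_univ, Set.iUnion_true, hEU,
      Set.indicator_eq_self.2 ha.support_subset] at this
    funext y
    rw [Finset.sum_apply]
    exact (congrFun this y).symm
  have hmean : ∑ i, ∫ y in E i, a y ∂μ = 0 := by
    rw [← integral_iUnion_fintype hE hdisj fun i => ha.1.integrableOn, hEU,
      setIntegral_eq_integral_of_forall_compl_eq_zero ha.2.2.2.1, ha.2.2.2.2]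
  simp only [smul_sub, Finset.sum_sub_distrib, ← Finset.sum_smul, hmean, zero_smul, hind]
  abel

end IsH1Atom

theorem IsH1Atom.isFiniteAtomicSum {M : Type*} [MetricSpace M] [MeasurableSpace M]
    [OpensMeasurableSpace M] {μ : Measure M} (hM : IsGeodesicSpace M) {V c : ℝ≥0∞}
    (h : UniformBallBounds μ V c) {a : M → ℂ} {x : M} {r : ℝ} (ha : IsH1Atom μ a x r)
    (hr : 1 < r) (hB : μ (ball x r) ≠ ⊤) :
    IsFiniteAtomicSum μ a (8 * V ^ (1 / 2 : ℝ) * c ^ (-(1 / 2) : ℝ) * ENNReal.ofReal r) := by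
  obtain ⟨n, P, E, hPB, hn, hEm, hEdisj, hEP, hEU⟩ :=
    hM.exists_partition_ball μ h.le_measure_ball h.ne_zero (by linarith) hB
  set b : M → M → ℂ := fun p => normalizedIndicator μ (ball p (1 / 4))
  set m : Fin n → ℂ := fun i => ∫ y in E i, a y ∂μ
  set K : ℕ := ⌈2 * r⌉₊
  have hK : (K : ℝ) < 2 * r + 1 := Nat.ceil_lt_add_one (by linarith)
  have hB₀ : μ (ball x r) ≠ 0 := ne_bot_of_le_ne_bot (h.measure_ball_quarter_ne_zero x)
    (measure_mono (ball_subset_ball (by linarith)))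
  have hpieces := IsFiniteAtomicSum.sum Finset.univ fun i _ =>
    h.isFiniteAtomicSum_indicator_sub ha.1 (ha.eLpNorm_ne_top hB₀) (hEm i) (hEP i)
  have hchains := IsFiniteAtomicSum.sum Finset.univ fun i _ =>
    h.isFiniteAtomicSum_smul_sub hM (m i) (K := K) (Nat.ceil_pos.2 (by linarith))
      ((mem_ball'.1 (hPB i)).le.trans (by linarith [Nat.le_ceil (2 * r)]))
  rw [ha.eq_sum_sub_add_sum_smul_sub hEm hEdisj hEU (fun i => b (P i)) (b x)]
  refine (hpieces.add hchains).mono ?_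
  have ht := ha.sum_eLpNorm_indicator_le hEm hEdisj h.ne_zero hB (by simpa using hn)
  have hm₁ := ha.sum_enorm_setIntegral_le_one hEm hEdisj
  have hK₈ : 2 + 2 * (K : ℝ≥0∞) ≤ 8 * ENNReal.ofReal r := by
    rw [← ENNReal.ofReal_natCast, ← ENNReal.ofReal_ofNat 8, ← ENNReal.ofReal_mul (by norm_num),
      ← ENNReal.ofReal_ofNat 2, ← ENNReal.ofReal_mul (by norm_num), ← ENNReal.ofReal_add
        (by norm_num) (by positivity)]
    exact ENNReal.ofReal_le_ofReal (by linarith)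
  set c' := c ^ (-(1 / 2) : ℝ)
  calc _ = V ^ (1 / 2 : ℝ) * (∑ i, eLpNorm ((E i).indicator a) 2 μ + (∑ i, ‖m i‖ₑ) * c') +
        K * (V ^ (1 / 2 : ℝ) * ((∑ i, ‖m i‖ₑ) * (2 * c'))) := by
        rw [← Finset.mul_sum, Finset.sum_add_distrib, ← Finset.sum_mul, ← Finset.mul_sum,
          ← Finset.mul_sum, ← Finset.sum_mul]
    _ ≤ V ^ (1 / 2 : ℝ) * (c' + 1 * c') + K * (V ^ (1 / 2 : ℝ) * (1 * (2 * c'))) := by gcongr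
    _ = V ^ (1 / 2 : ℝ) * c' * (2 + 2 * K) := by ring
    _ ≤ V ^ (1 / 2 : ℝ) * c' * (8 * ENNReal.ofReal r) := by gcongr
    _ = 8 * V ^ (1 / 2 : ℝ) * c' * ENNReal.ofReal r := by ring

theorem stmt3_general {M : Type*} [MetricSpace M] [MeasurableSpace M] [BorelSpace M]
    (μ : Measure M)
    -- every pair of points is joined by a minimizing geodesic
    (hGeo : ∀ x y : M, ∃ γ : ℝ → M, γ 0 = x ∧ γ (dist x y) = y ∧
      ∀ s ∈ Set.Icc (0 : ℝ) (dist x y), ∀ t ∈ Set.Icc (0 : ℝ) (dist x y),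
        dist (γ s) (γ t) = |s - t|)
    -- uniform ball size condition
    (hinf : ∀ r : ℝ, 0 < r → 0 < ⨅ x : M, μ (Metric.ball x r))
    (hsup : ∀ r : ℝ, 0 < r → (⨆ x : M, μ (Metric.ball x r)) < ⊤) :
    ∃ C : ℝ≥0∞, C < ⊤ ∧ ∀ (a : M → ℂ) (x : M) (r : ℝ), 1 < r →
      IsH1Atom μ a x r → hardyNorm1 μ a ≤ C * ENNReal.ofReal r := by
  have h : UniformBallBounds μ (⨆ x, μ (ball x 1)) (⨅ x, μ (ball x (1 / 4))) :=
    ⟨le_iSup (fun x => μ (ball x 1)), (hsup 1 one_pos).ne, iInf_le (fun x => μ (ball x (1 / 4))),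
      (hinf _ (by norm_num)).ne'⟩
  refine ⟨8 * (⨆ x, μ (ball x 1)) ^ (1 / 2 : ℝ) * (⨅ x, μ (ball x (1 / 4))) ^ (-(1 / 2) : ℝ),
    ENNReal.mul_lt_top (ENNReal.mul_lt_top (by norm_num)
      (ENNReal.rpow_lt_top_of_nonneg (by norm_num) h.ne_top)) h.rpow_neg_half_ne_top.lt_top,
    fun a x r hr ha => ?_⟩
  have : Nonempty M := ⟨x⟩
  have hB : μ (ball x r) ≠ ⊤ :=
    ne_top_of_le_ne_top (hsup r (by linarith)).ne (le_iSup (fun x => μ (ball x r)) x)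
  exact (ha.isFiniteAtomicSum hGeo h hr hB).hardyNorm1_le

theorem stmt3 {M : Type*} [MetricSpace M] [MeasurableSpace M] [BorelSpace M]
    (μ : Measure M)
    -- every pair of points is joined by a minimizing geodesic
    (hGeo : ∀ x y : M, ∃ γ : ℝ → M, γ 0 = x ∧ γ (dist x y) = y ∧
      ∀ s ∈ Set.Icc (0 : ℝ) (dist x y), ∀ t ∈ Set.Icc (0 : ℝ) (dist x y),
        dist (γ s) (γ t) = |s - t|)
    -- every ball has finite positive measure
    (hpos : ∀ (x : M) (r : ℝ), 0 < r → 0 < μ (Metric.ball x r))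
    (hfin : ∀ (x : M) (r : ℝ), 0 < r → μ (Metric.ball x r) < ⊤)
    -- local doubling property
    (hloc : ∀ s : ℝ, 0 < s → ∃ D : ℝ≥0∞, D < ⊤ ∧ ∀ (x : M) (r : ℝ), 0 < r → r ≤ s →
      μ (Metric.ball x (2 * r)) ≤ D * μ (Metric.ball x r))
    -- uniform ball size condition
    (hinf : ∀ r : ℝ, 0 < r → 0 < ⨅ x : M, μ (Metric.ball x r))
    (hsup : ∀ r : ℝ, 0 < r → (⨆ x : M, μ (Metric.ball x r)) < ⊤) :
    ∃ C : ℝ≥0∞, C < ⊤ ∧ ∀ (a : M → ℂ) (x : M) (r : ℝ), 1 < r →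
      IsH1Atom μ a x r → hardyNorm1 μ a ≤ C * ENNReal.ofReal r :=
  stmt3_general μ hGeo hinf hsup
end
end

section
/- Let β > 0, b ∈ (0, β²], τ ∈ [0,∞), let J be a positive integer and k an integer with k > τ + J, and let C ≥ 0. Suppose m is holomorphic on the strip S_β and satisfies |m^{(j)}(ζ)| ≤ C · max(|ζ²+β²|^{−τ−j}, |ζ|^{−j}) for all ζ ∈ S_β and all j ∈ {0, 1, …, J}. Then the function u_k(ζ) = ((ζ²+β²)/(ζ²+β²+b))^k · m(ζ) is holomorphic on S_β (note that ζ²+β²+b ≠ 0 on S_β), and there exists a constant C′ depending only on β, b, τ, J, k (and not on m or C) such that |u_k^{(j)}(ζ)| ≤ C′ C (1+|ζ|)^{−j} for all ζ ∈ S_β and all j ∈ {0, 1, …, J}. (This is the key estimate in the proof of Theorem 4.3 of the paper; the case b = β² also gives the estimate for the function v_k occurring there.) -/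
noncomputable section

/-- The function `u_k(ζ) = ((ζ²+β²)/(ζ²+β²+b))^k · m(ζ)`. -/
def uFun (β b : ℝ) (k : ℕ) (m : ℂ → ℂ) : ℂ → ℂ := fun ζ =>
  ((ζ ^ 2 + (β : ℂ) ^ 2) / (ζ ^ 2 + (β : ℂ) ^ 2 + (b : ℂ))) ^ k * m ζ

/-!
Write `u_k = G · m` with `G = (q / d)^k`, `q = ζ² + β²`, `d = q + b`. By induction,
`G⁽ⁿ⁾ = q^(k-n) Sₙ / d^(k+n)` with a polynomial `Sₙ` of degree at most `3n`. On the strip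
`|q| ≤ 2|d|` and `|d| ≳ (1 + |ζ|)²`, so that `|G⁽ⁿ⁾| (1 + |ζ|)^(n+s) ≲ |q|^s` whenever
`0 ≤ s ≤ k - n`; the assumption `k > τ + J` allows both `s = τ + e` and `s = 0` for `n + e ≤ J`.
By Leibniz' rule it remains to bound `|G⁽ⁱ⁾| |m⁽ᵉ⁾| (1 + |ζ|)^(i+e)`. Away from the origin this
follows from the bound on `m⁽ᵉ⁾`, with `s = τ + e` or `s = 0` according to which term realises the
minimum. Near the origin the bound on `m⁽ᵉ⁾` degenerates, and Cauchy's estimate on a disc of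
radius `β / 4` bounds `m⁽ᵉ⁾` by the bound on `m` itself.
-/

open Polynomial Filter Topology

theorem Polynomial.norm_eval_le_sum_norm_coeff_mul {𝕜 : Type*} [NormedField 𝕜] (P : 𝕜[X])
    {N : ℕ} (hP : P.natDegree ≤ N) (z : 𝕜) :
    ‖P.eval z‖ ≤ (∑ i ∈ Finset.range (N + 1), ‖P.coeff i‖) * (1 + ‖z‖) ^ N := by
  rw [P.eval_eq_sum_range' (Nat.lt_succ_of_le hP), Finset.sum_mul]
  refine (norm_sum_le _ _).trans (Finset.sum_le_sum fun i hi => ?_)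
  rw [norm_mul, norm_pow]
  have h1 : 1 ≤ 1 + ‖z‖ := le_add_of_nonneg_right (norm_nonneg z)
  gcongr
  calc ‖z‖ ^ i ≤ (1 + ‖z‖) ^ i := by gcongr; linarith
    _ ≤ (1 + ‖z‖) ^ N := pow_le_pow_right₀ h1 (Finset.mem_range_succ_iff.1 hi)

theorem Polynomial.exists_iteratedDeriv_eval_div_eval_pow_eq {𝕜 : Type*} [NontriviallyNormedField 𝕜]
    {Q D : 𝕜[X]} (hQ : Q.natDegree ≤ 2) (hD : D.natDegree ≤ 2) (k : ℕ) {n : ℕ} (hn : n ≤ k) :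
    ∃ S : 𝕜[X], S.natDegree ≤ 3 * n ∧ ∀ ζ, D.eval ζ ≠ 0 →
      iteratedDeriv n (fun w => (Q.eval w / D.eval w) ^ k) ζ =
        Q.eval ζ ^ (k - n) * S.eval ζ / D.eval ζ ^ (k + n) := by
  induction n with
  | zero => exact ⟨1, by simp, fun ζ _ => by simp [div_pow]⟩
  | succ n ih =>
    obtain ⟨S, hS, hrep⟩ := ih (by omega)
    refine ⟨C ((k - n : ℕ) : 𝕜) * derivative Q * S * D + Q * D * derivative S
      - C ((k + n : ℕ) : 𝕜) * Q * S * derivative D, ?_, fun ζ hζ => ?_⟩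
    · have hQ' := (natDegree_derivative_le Q).trans (Nat.sub_le_sub_right hQ 1)
      have hD' := (natDegree_derivative_le D).trans (Nat.sub_le_sub_right hD 1)
      have hQDS' : (Q * D * derivative S).natDegree ≤ 3 * (n + 1) := by
        rcases eq_or_ne S.natDegree 0 with h0 | h0
        · simp [derivative_of_natDegree_zero h0]
        · have := natDegree_derivative_lt h0
          refine natDegree_mul_le.trans ?_
          have := natDegree_mul_le (p := Q) (q := D)
          omega
      refine (natDegree_sub_le _ _).trans (max_le ((natDegree_add_le _ _).trans
        (max_le ?_ hQDS')) ?_)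
      · refine natDegree_mul_le.trans ?_
        have := natDegree_mul_le (p := C ((k - n : ℕ) : 𝕜) * derivative Q) (q := S)
        have := natDegree_mul_le (p := C ((k - n : ℕ) : 𝕜)) (q := derivative Q)
        simp only [natDegree_C] at *
        omega
      · refine natDegree_mul_le.trans ?_
        have := natDegree_mul_le (p := C ((k + n : ℕ) : 𝕜) * Q) (q := S)
        have := natDegree_mul_le (p := C ((k + n : ℕ) : 𝕜)) (q := Q)
        simp only [natDegree_C] at *
        omega
    · obtain ⟨a, rfl⟩ : ∃ a, k = n + 1 + a := ⟨k - (n + 1), by omega⟩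
      rw [show n + 1 + a - n = a + 1 by omega] at hrep
      have hnear : iteratedDeriv n (fun w => (Q.eval w / D.eval w) ^ (n + 1 + a)) =ᶠ[𝓝 ζ]
          fun w => Q.eval w ^ (a + 1) * S.eval w / D.eval w ^ (n + 1 + a + n) :=
        eventually_of_mem ((isOpen_ne_fun D.continuous continuous_const).mem_nhds hζ) hrep
      have hderiv : HasDerivAt (fun w => Q.eval w ^ (a + 1) * S.eval w / D.eval w ^ (n + 1 + a + n))
          _ ζ := (((Q.hasDerivAt ζ).pow _).mul (S.hasDerivAt ζ)).div
            ((D.hasDerivAt ζ).pow _) (pow_ne_zero _ hζ)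
      rw [iteratedDeriv_succ, hnear.deriv_eq, hderiv.deriv, show n + 1 + a - n = a + 1 by omega,
        show n + 1 + a - (n + 1) = a by omega, show n + 1 + a + n - 1 = a + 2 * n by omega,
        show n + 1 + a + (n + 1) = a + 2 * n + 2 by omega,
        show n + 1 + a + n = a + 2 * n + 1 by omega]
      simp only [Pi.pow_apply, Pi.mul_apply, eval_add, eval_sub, eval_mul, eval_C,
        add_tsub_cancel_right]
      push_cast
      field_simp
      ring

theorem norm_iteratedDeriv_mul_le_of_isOpen {𝕜 A : Type*} [NontriviallyNormedField 𝕜]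
    [NormedRing A] [NormedAlgebra 𝕜 A] {s : Set 𝕜} (hs : IsOpen s) {f g : 𝕜 → A} {n : ℕ}
    (hf : ContDiffOn 𝕜 n f s) (hg : ContDiffOn 𝕜 n g s) {x : 𝕜} (hx : x ∈ s) :
    ‖iteratedDeriv n (fun y => f y * g y) x‖ ≤ ∑ i ∈ Finset.range (n + 1),
      (n.choose i : ℝ) * ‖iteratedDeriv i f x‖ * ‖iteratedDeriv (n - i) g x‖ := by
  simp only [← norm_iteratedFDeriv_eq_norm_iteratedDeriv, ← iteratedFDerivWithin_of_isOpen _ hs hx]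
  exact norm_iteratedFDerivWithin_mul_le hf hg hs.uniqueDiffOn hx le_rfl

theorem rpow_div_rpow_mul_rpow_le {A D c t a x s : ℝ} (hA : 0 < A) (hAD : A ≤ 2 * D)
    (hc : 0 < c) (ht : 0 < t) (hct : c * t ^ 2 ≤ D) (hs : 0 ≤ s) (hsa : s ≤ a) (hx : 0 ≤ x) :
    A ^ a / D ^ (a + x) * t ^ (2 * (x + s)) ≤ 2 ^ a / c ^ (x + s) * A ^ s := by
  have hD : 0 < D := lt_of_lt_of_le (by positivity) hct
  have hAa : A ^ (a - s) ≤ 2 ^ a * D ^ (a - s) :=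
    calc A ^ (a - s) ≤ (2 * D) ^ (a - s) := by gcongr
      _ = 2 ^ (a - s) * D ^ (a - s) := Real.mul_rpow zero_le_two hD.le
      _ ≤ 2 ^ a * D ^ (a - s) := by gcongr; exacts [one_le_two, by linarith]
  have hDx : c ^ (x + s) * t ^ (2 * (x + s)) ≤ D ^ (x + s) :=
    calc c ^ (x + s) * t ^ (2 * (x + s)) = (c * t ^ 2) ^ (x + s) := by
          rw [Real.mul_rpow hc.le (by positivity), Real.rpow_mul ht.le, Real.rpow_two]
      _ ≤ D ^ (x + s) := by gcongr
  rw [show A ^ a = A ^ s * A ^ (a - s) by rw [← Real.rpow_add hA]; ring_nf,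
    show D ^ (a + x) = D ^ (a - s) * D ^ (x + s) by rw [← Real.rpow_add hD]; ring_nf,
    div_mul_eq_mul_div, div_le_iff₀ (by positivity)]
  calc A ^ s * A ^ (a - s) * t ^ (2 * (x + s))
      ≤ A ^ s * (2 ^ a * D ^ (a - s)) * t ^ (2 * (x + s)) := by gcongr
    _ = 2 ^ a * A ^ s * D ^ (a - s) * (c ^ (x + s) * t ^ (2 * (x + s))) / c ^ (x + s) := by
        field_simp
    _ ≤ 2 ^ a * A ^ s * D ^ (a - s) * D ^ (x + s) / c ^ (x + s) := by gcongr
    _ = _ := by ring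

def ratioPow (β b : ℝ) (k : ℕ) : ℂ → ℂ := fun ζ =>
  ((ζ ^ 2 + (β : ℂ) ^ 2) / (ζ ^ 2 + (β : ℂ) ^ 2 + (b : ℂ))) ^ k

/-- `m` satisfies the bounds of the class `H(S_β; J, τ)` with constant `C`. -/
def HClassBound (β τ : ℝ) (J : ℕ) (C : ℝ) (m : ℂ → ℂ) : Prop :=
  ∀ ζ : ℂ, |ζ.im| < β → ∀ j : ℕ, j ≤ J →
    ‖iteratedDeriv j m ζ‖ * min (‖ζ ^ 2 + (β : ℂ) ^ 2‖ ^ (τ + (j : ℝ))) (‖ζ‖ ^ j) ≤ C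

section Strip

variable {β b : ℝ} {ζ : ℂ}

theorem re_sq_add_lt_re (hζ : |ζ.im| < β) :
    ζ.re ^ 2 + b < (ζ ^ 2 + (β : ℂ) ^ 2 + (b : ℂ)).re := by
  have : ζ.im ^ 2 < β ^ 2 := sq_lt_sq' (abs_lt.1 hζ).1 (abs_lt.1 hζ).2
  simp only [Complex.add_re, sq, Complex.mul_re, Complex.ofReal_re, Complex.ofReal_im]
  nlinarith

theorem sq_add_sq_add_ne_zero (hb : 0 ≤ b) (hζ : |ζ.im| < β) :
    ζ ^ 2 + (β : ℂ) ^ 2 + (b : ℂ) ≠ 0 := by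
  intro h
  have := re_sq_add_lt_re (b := b) hζ
  rw [h, Complex.zero_re] at this
  nlinarith [sq_nonneg ζ.re]

theorem sq_add_sq_ne_zero (hζ : |ζ.im| < β) : ζ ^ 2 + (β : ℂ) ^ 2 ≠ 0 := by
  simpa using sq_add_sq_add_ne_zero le_rfl hζ

theorem le_norm_sq_add_sq_add (hζ : |ζ.im| < β) :
    ζ.re ^ 2 + b ≤ ‖ζ ^ 2 + (β : ℂ) ^ 2 + (b : ℂ)‖ :=
  (re_sq_add_lt_re hζ).le.trans (Complex.re_le_norm _)

theorem norm_sq_add_sq_le (hb : 0 ≤ b) (hζ : |ζ.im| < β) :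
    ‖ζ ^ 2 + (β : ℂ) ^ 2‖ ≤ 2 * ‖ζ ^ 2 + (β : ℂ) ^ 2 + (b : ℂ)‖ := by
  have hbd : b ≤ ‖ζ ^ 2 + (β : ℂ) ^ 2 + (b : ℂ)‖ := by
    nlinarith [le_norm_sq_add_sq_add (b := b) hζ, sq_nonneg ζ.re]
  calc ‖ζ ^ 2 + (β : ℂ) ^ 2‖ = ‖(ζ ^ 2 + (β : ℂ) ^ 2 + (b : ℂ)) - (b : ℂ)‖ := by ring_nf
    _ ≤ ‖ζ ^ 2 + (β : ℂ) ^ 2 + (b : ℂ)‖ + ‖(b : ℂ)‖ := norm_sub_le _ _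
    _ = ‖ζ ^ 2 + (β : ℂ) ^ 2 + (b : ℂ)‖ + b := by rw [Complex.norm_real, Real.norm_of_nonneg hb]
    _ ≤ 2 * ‖ζ ^ 2 + (β : ℂ) ^ 2 + (b : ℂ)‖ := by linarith

theorem exists_mul_one_add_norm_sq_le (hb : 0 < b) : ∃ c > 0, ∀ ζ : ℂ, |ζ.im| < β →
    c * (1 + ‖ζ‖) ^ 2 ≤ ‖ζ ^ 2 + (β : ℂ) ^ 2 + (b : ℂ)‖ := by
  refine ⟨min (b / (4 * (1 + β ^ 2))) (1 / 2), by positivity, fun ζ hζ => ?_⟩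
  have hβ : 0 < β := (abs_nonneg _).trans_lt hζ
  have hnorm : 1 + ‖ζ‖ ≤ (1 + β) + |ζ.re| := by
    linarith [Complex.norm_le_abs_re_add_abs_im ζ]
  have hsq : (1 + ‖ζ‖) ^ 2 ≤ 4 * (1 + β ^ 2) + 2 * ζ.re ^ 2 := by
    nlinarith [sq_abs ζ.re, sq_nonneg (1 + β - |ζ.re|), sq_nonneg (1 - β), norm_nonneg ζ]
  have h1 : min (b / (4 * (1 + β ^ 2))) (1 / 2) * (4 * (1 + β ^ 2)) ≤ b := by
    rw [← le_div_iff₀ (by positivity)]; exact min_le_left _ _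
  have h2 : min (b / (4 * (1 + β ^ 2))) (1 / 2) * 2 ≤ 1 := by
    linarith [min_le_right (b / (4 * (1 + β ^ 2))) (1 / 2)]
  have hc : 0 ≤ min (b / (4 * (1 + β ^ 2))) (1 / 2) := by positivity
  nlinarith [le_norm_sq_add_sq_add (b := b) hζ, mul_le_mul_of_nonneg_left hsq hc,
    mul_le_mul_of_nonneg_right h2 (sq_nonneg ζ.re)]

theorem half_sq_le_norm_sq_add_sq (hζ : ‖ζ‖ ≤ β / 2) : β ^ 2 / 2 ≤ ‖ζ ^ 2 + (β : ℂ) ^ 2‖ := by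
  have hβ : 0 ≤ β := by linarith [norm_nonneg ζ]
  have hζ2 : ‖ζ‖ ^ 2 ≤ (β / 2) ^ 2 := by gcongr
  have := norm_sub_le (ζ ^ 2 + (β : ℂ) ^ 2) (ζ ^ 2)
  rw [add_sub_cancel_left, norm_pow, norm_pow, Complex.norm_real, Real.norm_of_nonneg hβ] at this
  nlinarith

theorem HClassBound.nonneg {τ C : ℝ} {J : ℕ} {m : ℂ → ℂ} (hm : HClassBound β τ J C m)
    (hζ : |ζ.im| < β) : 0 ≤ C :=
  (by positivity : (0 : ℝ) ≤ _).trans (hm ζ hζ 0 (Nat.zero_le J))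

theorem differentiableOn_ratioPow (hb : 0 ≤ b) (k : ℕ) :
    DifferentiableOn ℂ (ratioPow β b k) {ζ : ℂ | |ζ.im| < β} :=
  ((((differentiable_pow 2).add_const _).differentiableOn).div
    (((differentiable_pow 2).add_const _).add_const _).differentiableOn
    fun _ hζ => sq_add_sq_add_ne_zero hb hζ).pow k

theorem ratioPow_eq_eval_div_eval (k : ℕ) :
    ratioPow β b k = fun ζ => ((X ^ 2 + C ((β : ℂ) ^ 2)).eval ζ /
      (X ^ 2 + C ((β : ℂ) ^ 2 + (b : ℂ))).eval ζ) ^ k := by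
  funext ζ
  simp [ratioPow, add_assoc]

-- Constants are stated as `∀ᶠ K in atTop` so that finitely many of them combine through
-- `Filter.eventually_all_finset`.
theorem eventually_norm_iteratedDeriv_ratioPow_mul_le (hb : 0 < b) {k n : ℕ} {s : ℝ}
    (hs : 0 ≤ s) (hnsk : n + s ≤ k) :
    ∀ᶠ K in atTop, ∀ ζ : ℂ, |ζ.im| < β →
      ‖iteratedDeriv n (ratioPow β b k) ζ‖ * (1 + ‖ζ‖) ^ ((n : ℝ) + s) ≤
        K * ‖ζ ^ 2 + (β : ℂ) ^ 2‖ ^ s := by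
  have hnk : n ≤ k := by exact_mod_cast (le_add_of_nonneg_right hs).trans hnsk
  obtain ⟨S, hSdeg, hS⟩ := exists_iteratedDeriv_eval_div_eval_pow_eq (Q := X ^ 2 + C ((β : ℂ) ^ 2))
    (D := X ^ 2 + C ((β : ℂ) ^ 2 + (b : ℂ))) (by compute_degree!) (by compute_degree!) k hnk
  obtain ⟨c, hc, hcD⟩ := exists_mul_one_add_norm_sq_le (β := β) hb
  set KS := ∑ i ∈ Finset.range (3 * n + 1), ‖S.coeff i‖
  filter_upwards [eventually_ge_atTop (KS * (2 ^ ((k : ℝ) - n) / c ^ (2 * n + s)))]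
    with K hK ζ hζ
  set A := ‖ζ ^ 2 + (β : ℂ) ^ 2‖
  set D := ‖ζ ^ 2 + (β : ℂ) ^ 2 + (b : ℂ)‖
  set t := 1 + ‖ζ‖
  have hA : 0 < A := norm_pos_iff.2 (sq_add_sq_ne_zero hζ)
  have ht : 1 ≤ t := le_add_of_nonneg_right (norm_nonneg ζ)
  set R := A ^ ((k : ℝ) - n) / D ^ (((k : ℝ) - n) + 2 * n)
  have hR : 0 ≤ R := by positivity
  have hrep : ‖iteratedDeriv n (ratioPow β b k) ζ‖ = R * ‖S.eval ζ‖ := by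
    have hD0 : (X ^ 2 + C ((β : ℂ) ^ 2 + (b : ℂ))).eval ζ ≠ 0 := by
      simpa [add_assoc] using sq_add_sq_add_ne_zero hb.le hζ
    have hR' : R = A ^ (k - n) / D ^ (k + n) := by
      rw [← Real.rpow_natCast, ← Real.rpow_natCast, Nat.cast_sub hnk, Nat.cast_add]
      simp only [R]
      congr 2
      ring
    rw [ratioPow_eq_eval_div_eval, hS ζ hD0, hR']
    simp only [eval_add, eval_pow, eval_X, eval_C, norm_div, norm_mul, norm_pow, A, D, add_assoc]
    ring
  have hpow : t ^ (3 * n) * t ^ ((n : ℝ) + s) ≤ t ^ (2 * (2 * n + s)) := by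
    rw [← Real.rpow_natCast, ← Real.rpow_add (by positivity)]
    exact Real.rpow_le_rpow_of_exponent_le ht (by push_cast; linarith)
  calc ‖iteratedDeriv n (ratioPow β b k) ζ‖ * t ^ ((n : ℝ) + s)
      = R * ‖S.eval ζ‖ * t ^ ((n : ℝ) + s) := by rw [hrep]
    _ ≤ R * (KS * t ^ (3 * n)) * t ^ ((n : ℝ) + s) := by
        gcongr
        exact S.norm_eval_le_sum_norm_coeff_mul hSdeg ζ
    _ = KS * (R * (t ^ (3 * n) * t ^ ((n : ℝ) + s))) := by ring
    _ ≤ KS * (R * t ^ (2 * (2 * n + s))) := by gcongr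
    _ ≤ KS * (2 ^ ((k : ℝ) - n) / c ^ (2 * n + s) * A ^ s) := by
        refine mul_le_mul_of_nonneg_left (rpow_div_rpow_mul_rpow_le hA
          (norm_sq_add_sq_le hb.le hζ) hc (by positivity) (hcD ζ hζ) hs ?_ (by positivity))
          (by positivity)
        linarith
    _ ≤ K * A ^ s := by rw [← mul_assoc]; gcongr

theorem norm_iteratedDeriv_le_of_norm_le_quarter {τ C : ℝ} (hβ : 0 < β) (hτ : 0 ≤ τ)
    {m : ℂ → ℂ} (hm : DifferentiableOn ℂ m {w : ℂ | |w.im| < β})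
    (hmC : ∀ w : ℂ, |w.im| < β → ‖m w‖ * min (‖w ^ 2 + (β : ℂ) ^ 2‖ ^ τ) 1 ≤ C)
    (hζ : ‖ζ‖ ≤ β / 4) (e : ℕ) :
    ‖iteratedDeriv e m ζ‖ ≤ e.factorial * (C / min ((β ^ 2 / 2) ^ τ) 1) / (β / 4) ^ e := by
  have hμ : 0 < min ((β ^ 2 / 2) ^ τ) 1 := by positivity
  have hball : ∀ w ∈ Metric.closedBall ζ (β / 4), ‖w‖ ≤ β / 2 := fun w hw => by
    linarith [norm_le_norm_add_norm_sub' w ζ, (mem_closedBall_iff_norm.1 hw)]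
  have hstrip : ∀ w ∈ Metric.closedBall ζ (β / 4), |w.im| < β := fun w hw => by
    linarith [Complex.abs_im_le_norm w, hball w hw]
  refine Complex.norm_iteratedDeriv_le_of_forall_mem_sphere_norm_le e (by positivity)
    (hm.diffContOnCl_ball hstrip) fun w hw => ?_
  have hw := Metric.sphere_subset_closedBall hw
  rw [le_div_iff₀ hμ]
  refine le_trans ?_ (hmC w (hstrip w hw))
  gcongr
  exact half_sq_le_norm_sq_add_sq (hball w hw)

theorem eventually_norm_iteratedDeriv_ratioPow_mul_le_min (hb : 0 < b) {τ : ℝ} (hτ : 0 ≤ τ)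
    {k i e : ℕ} (hk : i + (τ + e) ≤ k) :
    ∀ᶠ K in atTop, ∀ ζ : ℂ, |ζ.im| < β →
      ‖iteratedDeriv i (ratioPow β b k) ζ‖ * (1 + ‖ζ‖) ^ (i + e) ≤
        K * min (‖ζ ^ 2 + (β : ℂ) ^ 2‖ ^ (τ + e)) ((1 + ‖ζ‖) ^ e) := by
  obtain ⟨K₁, hK₁, hK₁0⟩ := ((eventually_norm_iteratedDeriv_ratioPow_mul_le (β := β) hb
    (by positivity) hk).and (eventually_ge_atTop 0)).exists
  obtain ⟨K₀, hK₀⟩ := (eventually_norm_iteratedDeriv_ratioPow_mul_le (β := β) (k := k) hb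
    (n := i) le_rfl (by linarith)).exists
  filter_upwards [eventually_ge_atTop K₁, eventually_ge_atTop K₀] with K h₁ h₀ ζ hζ
  have ht : 1 ≤ 1 + ‖ζ‖ := le_add_of_nonneg_right (norm_nonneg ζ)
  rw [mul_min_of_nonneg _ _ (hK₁0.trans h₁)]
  refine le_min ?_ ?_
  · calc ‖iteratedDeriv i (ratioPow β b k) ζ‖ * (1 + ‖ζ‖) ^ (i + e)
        ≤ ‖iteratedDeriv i (ratioPow β b k) ζ‖ * (1 + ‖ζ‖) ^ ((i : ℝ) + (τ + e)) := by
          rw [← Real.rpow_natCast]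
          gcongr
          push_cast
          linarith
      _ ≤ K₁ * ‖ζ ^ 2 + (β : ℂ) ^ 2‖ ^ (τ + e) := hK₁ ζ hζ
      _ ≤ K * ‖ζ ^ 2 + (β : ℂ) ^ 2‖ ^ (τ + e) := by gcongr
  · calc ‖iteratedDeriv i (ratioPow β b k) ζ‖ * (1 + ‖ζ‖) ^ (i + e)
        = ‖iteratedDeriv i (ratioPow β b k) ζ‖ * (1 + ‖ζ‖) ^ i * (1 + ‖ζ‖) ^ e := by ring
      _ ≤ K * (1 + ‖ζ‖) ^ e := by
          have h := hK₀ ζ hζ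
          simp only [add_zero, Real.rpow_natCast, Real.rpow_zero, mul_one] at h
          exact mul_le_mul_of_nonneg_right (h.trans h₀) (by positivity)

theorem eventually_norm_iteratedDeriv_ratioPow_mul_norm_iteratedDeriv_le (hb : 0 < b) {τ : ℝ}
    (hτ : 0 ≤ τ) {J k i e : ℕ} (hie : i + e ≤ J) (hk : τ + J < k) :
    ∀ᶠ K in atTop, ∀ C : ℝ, ∀ m : ℂ → ℂ, DifferentiableOn ℂ m {w : ℂ | |w.im| < β} →
      HClassBound β τ J C m → ∀ ζ : ℂ, |ζ.im| < β →
        ‖iteratedDeriv i (ratioPow β b k) ζ‖ * ‖iteratedDeriv e m ζ‖ * (1 + ‖ζ‖) ^ (i + e) ≤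
          K * C := by
  have hieR : (i : ℝ) + e ≤ J := by exact_mod_cast hie
  obtain ⟨K₁, hK₁, hK₁0⟩ := ((eventually_norm_iteratedDeriv_ratioPow_mul_le_min (β := β)
    (k := k) (i := i) (e := e) hb hτ (by linarith)).and (eventually_ge_atTop 0)).exists
  filter_upwards [eventually_ge_atTop (K₁ * (1 + 4 / β) ^ e), eventually_ge_atTop
    (K₁ * (1 + β / 4) ^ e * (e.factorial * (1 / min ((β ^ 2 / 2) ^ τ) 1) / (β / 4) ^ e))]
    with K hKfar hKnear C m hmd hm ζ hζ
  have hβ : 0 < β := (abs_nonneg _).trans_lt hζ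
  have hC : 0 ≤ C := hm.nonneg hζ
  have hK : 0 ≤ K := (by positivity : 0 ≤ K₁ * (1 + 4 / β) ^ e).trans hKfar
  set A := ‖ζ ^ 2 + (β : ℂ) ^ 2‖
  set M := ‖iteratedDeriv e m ζ‖
  have hG := hK₁ ζ hζ
  by_cases hnear : ‖ζ‖ ≤ β / 4
  · have hM : M ≤ e.factorial * (C / min ((β ^ 2 / 2) ^ τ) 1) / (β / 4) ^ e :=
      norm_iteratedDeriv_le_of_norm_le_quarter hβ hτ hmd
        (fun w hw => by simpa using hm w hw 0 (Nat.zero_le J)) hnear e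
    have hmin : min (A ^ (τ + e)) ((1 + ‖ζ‖) ^ e) ≤ (1 + β / 4) ^ e :=
      (min_le_right _ _).trans (by gcongr)
    calc ‖iteratedDeriv i (ratioPow β b k) ζ‖ * M * (1 + ‖ζ‖) ^ (i + e)
        = ‖iteratedDeriv i (ratioPow β b k) ζ‖ * (1 + ‖ζ‖) ^ (i + e) * M := by ring
      _ ≤ K₁ * (1 + β / 4) ^ e * M :=
          mul_le_mul_of_nonneg_right (hG.trans (mul_le_mul_of_nonneg_left hmin hK₁0))
            (norm_nonneg _)
      _ ≤ K₁ * (1 + β / 4) ^ e * (e.factorial * (C / min ((β ^ 2 / 2) ^ τ) 1) / (β / 4) ^ e) := by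
          gcongr
      _ = K₁ * (1 + β / 4) ^ e *
          (e.factorial * (1 / min ((β ^ 2 / 2) ^ τ) 1) / (β / 4) ^ e) * C := by ring
      _ ≤ K * C := by gcongr
  · have hM := hm ζ hζ e ((Nat.le_add_left e i).trans hie)
    have hfar : 1 + ‖ζ‖ ≤ (1 + 4 / β) * ‖ζ‖ := by
      have : 1 ≤ 4 / β * ‖ζ‖ := by rw [div_mul_eq_mul_div, le_div_iff₀ hβ]; linarith
      linarith
    have hmin : min (A ^ (τ + e)) ((1 + ‖ζ‖) ^ e) ≤
        (1 + 4 / β) ^ e * min (A ^ (τ + e)) (‖ζ‖ ^ e) := by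
      rw [mul_min_of_nonneg _ _ (by positivity), ← mul_pow]
      exact min_le_min (le_mul_of_one_le_left (by positivity) (one_le_pow₀ (by
        have : 0 < 4 / β := by positivity
        linarith))) (by gcongr)
    calc ‖iteratedDeriv i (ratioPow β b k) ζ‖ * M * (1 + ‖ζ‖) ^ (i + e)
        = ‖iteratedDeriv i (ratioPow β b k) ζ‖ * (1 + ‖ζ‖) ^ (i + e) * M := by ring
      _ ≤ K₁ * ((1 + 4 / β) ^ e * min (A ^ (τ + e)) (‖ζ‖ ^ e)) * M :=
          mul_le_mul_of_nonneg_right (hG.trans (mul_le_mul_of_nonneg_left hmin hK₁0))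
            (norm_nonneg _)
      _ = K₁ * (1 + 4 / β) ^ e * (M * min (A ^ (τ + e)) (‖ζ‖ ^ e)) := by ring
      _ ≤ K * C := by gcongr

theorem eventually_norm_iteratedDeriv_uFun_mul_le {τ : ℝ} (hb : 0 < b) (hτ : 0 ≤ τ)
    {J k j : ℕ} (hj : j ≤ J) (hk : τ + J < k) :
    ∀ᶠ K in atTop, ∀ C : ℝ, ∀ m : ℂ → ℂ, DifferentiableOn ℂ m {w : ℂ | |w.im| < β} →
      HClassBound β τ J C m → ∀ ζ : ℂ, |ζ.im| < β →
        ‖iteratedDeriv j (uFun β b k m) ζ‖ * (1 + ‖ζ‖) ^ j ≤ K * C := by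
  obtain ⟨K, hK⟩ := ((Filter.eventually_all_finset (Finset.range (j + 1))).2 fun i hi =>
    eventually_norm_iteratedDeriv_ratioPow_mul_norm_iteratedDeriv_le (β := β) (b := b) (k := k)
      (i := i) (e := j - i) hb hτ (by rw [Finset.mem_range_succ_iff] at hi; omega) hk).exists
  filter_upwards [eventually_ge_atTop (2 ^ j * K)] with K' hK' C m hmd hm ζ hζ
  have hs : IsOpen {w : ℂ | |w.im| < β} := isOpen_lt Complex.continuous_im.abs continuous_const
  calc ‖iteratedDeriv j (uFun β b k m) ζ‖ * (1 + ‖ζ‖) ^ j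
      ≤ (∑ i ∈ Finset.range (j + 1), (j.choose i : ℝ) * ‖iteratedDeriv i (ratioPow β b k) ζ‖ *
          ‖iteratedDeriv (j - i) m ζ‖) * (1 + ‖ζ‖) ^ j := by
        gcongr
        exact norm_iteratedDeriv_mul_le_of_isOpen hs
          ((differentiableOn_ratioPow hb.le k).contDiffOn hs) (hmd.contDiffOn hs) hζ
    _ = ∑ i ∈ Finset.range (j + 1), (j.choose i : ℝ) * (‖iteratedDeriv i (ratioPow β b k) ζ‖ *
          ‖iteratedDeriv (j - i) m ζ‖ * (1 + ‖ζ‖) ^ (i + (j - i))) := by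
        rw [Finset.sum_mul]
        refine Finset.sum_congr rfl fun i hi => ?_
        rw [Nat.add_sub_cancel' (Finset.mem_range_succ_iff.1 hi)]
        ring
    _ ≤ ∑ i ∈ Finset.range (j + 1), (j.choose i : ℝ) * (K * C) := by
        exact Finset.sum_le_sum fun i hi =>
          mul_le_mul_of_nonneg_left (hK i hi C m hmd hm ζ hζ) (by positivity)
    _ = 2 ^ j * K * C := by
        rw [← Finset.sum_mul, ← Nat.cast_sum, Nat.sum_range_choose]
        push_cast
        ring
    _ ≤ K' * C := by
        gcongr
        exact hm.nonneg hζ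

end Strip

theorem stmt4_general (β b τ : ℝ) (hb : 0 < b)
    (hτ : 0 ≤ τ) (J k : ℕ) (hk : τ + J < (k : ℝ)) :
    -- `ζ² + β² + b ≠ 0` on the strip `S_β`
    (∀ ζ : ℂ, |ζ.im| < β → ζ ^ 2 + (β : ℂ) ^ 2 + (b : ℂ) ≠ 0) ∧
    ∃ C' : ℝ, ∀ C : ℝ, 0 ≤ C → ∀ m : ℂ → ℂ,
      DifferentiableOn ℂ m {ζ : ℂ | |ζ.im| < β} →
      -- `|m⁽ʲ⁾(ζ)| ≤ C · max(|ζ²+β²|^{-τ-j}, |ζ|^{-j})` on `S_β`, for `0 ≤ j ≤ J`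
      (∀ ζ : ℂ, |ζ.im| < β → ∀ j : ℕ, j ≤ J →
        ‖iteratedDeriv j m ζ‖ *
          min (‖ζ ^ 2 + (β : ℂ) ^ 2‖ ^ (τ + (j : ℝ))) (‖ζ‖ ^ j) ≤ C) →
      -- conclusion: `u_k` is holomorphic on `S_β` and satisfies Mihlin bounds there
      DifferentiableOn ℂ (uFun β b k m) {ζ : ℂ | |ζ.im| < β} ∧
      ∀ ζ : ℂ, |ζ.im| < β → ∀ j : ℕ, j ≤ J →
        ‖iteratedDeriv j (uFun β b k m) ζ‖ ≤ C' * C / (1 + ‖ζ‖) ^ j := by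
  refine ⟨fun ζ hζ => sq_add_sq_add_ne_zero hb.le hζ, ?_⟩
  obtain ⟨C', hC'⟩ := ((Filter.eventually_all_finset (Finset.range (J + 1))).2 fun j hj =>
    eventually_norm_iteratedDeriv_uFun_mul_le (β := β) hb hτ
      (Finset.mem_range_succ_iff.1 hj) hk).exists
  refine ⟨C', fun C _ m hm hmC => ⟨(differentiableOn_ratioPow hb.le k).mul hm,
    fun ζ hζ j hj => ?_⟩⟩
  rw [le_div_iff₀ (by positivity)]
  exact hC' j (Finset.mem_range_succ_iff.2 hj) C m hm hmC ζ hζ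

theorem stmt4 (β b τ : ℝ) (hβ : 0 < β) (hb : 0 < b) (hbβ : b ≤ β ^ 2)
    (hτ : 0 ≤ τ) (J k : ℕ) (hJ : 0 < J) (hk : τ + J < (k : ℝ)) :
    -- `ζ² + β² + b ≠ 0` on the strip `S_β`
    (∀ ζ : ℂ, |ζ.im| < β → ζ ^ 2 + (β : ℂ) ^ 2 + (b : ℂ) ≠ 0) ∧
    ∃ C' : ℝ, ∀ C : ℝ, 0 ≤ C → ∀ m : ℂ → ℂ,
      DifferentiableOn ℂ m {ζ : ℂ | |ζ.im| < β} →
      -- `|m⁽ʲ⁾(ζ)| ≤ C · max(|ζ²+β²|^{-τ-j}, |ζ|^{-j})` on `S_β`, for `0 ≤ j ≤ J`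
      (∀ ζ : ℂ, |ζ.im| < β → ∀ j : ℕ, j ≤ J →
        ‖iteratedDeriv j m ζ‖ *
          min (‖ζ ^ 2 + (β : ℂ) ^ 2‖ ^ (τ + (j : ℝ))) (‖ζ‖ ^ j) ≤ C) →
      -- conclusion: `u_k` is holomorphic on `S_β` and satisfies Mihlin bounds there
      DifferentiableOn ℂ (uFun β b k m) {ζ : ℂ | |ζ.im| < β} ∧
      ∀ ζ : ℂ, |ζ.im| < β → ∀ j : ℕ, j ≤ J →
        ‖iteratedDeriv j (uFun β b k m) ζ‖ ≤ C' * C / (1 + ‖ζ‖) ^ j :=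
  stmt4_general β b τ hb hτ J k hk
end
end

section
/- Let β > 0, u ∈ ℝ, τ ∈ [0,∞), and let J be a positive integer. For every ζ in the strip S_β the complex numbers ζ²+β² and ζ²+β²+1 have strictly positive real part, so the function m(ζ) = (ζ²+β²)^{−iu−τ} · (ζ²+β²+1)^{τ}, defined using principal branch complex powers, is well defined, holomorphic and even on S_β. Moreover there exists a constant C = C(β,u,τ,J) such that |m^{(j)}(ζ)| ≤ C · max(|ζ²+β²|^{−τ−j}, |ζ|^{−j}) for all ζ ∈ S_β and all j ∈ {0, 1, …, J}; that is, m belongs to H(S_β;J,τ). (This is the example in Remark 4.2 of the paper, the multiplier of the operator 𝓛^{−iu−τ}(𝓛+I)^{τ} when b = β².) -/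
noncomputable section

/-- The multiplier `m(ζ) = (ζ²+β²)^{-iu-τ} · (ζ²+β²+1)^τ`, with principal branch powers. -/
def mFun (β u τ : ℝ) : ℂ → ℂ := fun ζ =>
  (ζ ^ 2 + (β : ℂ) ^ 2) ^ (-(Complex.I * (u : ℂ)) - (τ : ℂ)) *
    (ζ ^ 2 + (β : ℂ) ^ 2 + 1) ^ (τ : ℂ)

open Complex Metric Real
open scoped Nat

/-!
Write `w = ζ² + β² = (ζ - iβ)(ζ + iβ)` and let `d` be the distance from `ζ` to `±iβ`. The closed
disc of radius `d / 2` about a point of the strip misses the branch cuts `{iy : |y| ≥ β}` of both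
factors of `m`, and on it `|z² + β²| ≥ |w| / 4`. Since `|m(z)| ≤ e^{π|u|} (1 + 1/|z² + β²|)^τ`,
Cauchy's estimate gives `|m⁽ʲ⁾(ζ)| ≤ j! e^{π|u|} (1 + 4/|w|)^τ (2/d)^j`. Near the origin
`|w| ≤ d (|ζ| + β)` makes `|w|^{τ+j}` absorb this; far from it `d ≥ |ζ|/2` and `|w| ≥ β²`, so
`|ζ|^j` does.
-/

def rootDist (a ζ : ℂ) : ℝ := min ‖ζ - a‖ ‖ζ + a‖

section rootDist

variable {a ζ z : ℂ}

lemma norm_sq_sub_sq (a ζ : ℂ) : ‖ζ ^ 2 - a ^ 2‖ = ‖ζ - a‖ * ‖ζ + a‖ := by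
  rw [sq_sub_sq, norm_mul, mul_comm]

lemma rootDist_sq_le : rootDist a ζ ^ 2 ≤ ‖ζ ^ 2 - a ^ 2‖ := by
  rw [norm_sq_sub_sq, sq]
  exact mul_le_mul (min_le_left _ _) (min_le_right _ _) (le_min (norm_nonneg _) (norm_nonneg _))
    (norm_nonneg _)

lemma norm_sq_sub_sq_le_rootDist_mul : ‖ζ ^ 2 - a ^ 2‖ ≤ rootDist a ζ * (‖ζ‖ + ‖a‖) := by
  rw [norm_sq_sub_sq, ← min_mul_max, rootDist]
  gcongr
  exact max_le (norm_sub_le _ _) (norm_add_le _ _)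

lemma norm_sub_norm_le_rootDist : ‖ζ‖ - ‖a‖ ≤ rootDist a ζ :=
  le_min (norm_sub_norm_le ζ a) (by simpa using norm_sub_norm_le ζ (-a))

lemma norm_sq_sub_sq_le_four_mul (hz : ‖z - ζ‖ ≤ rootDist a ζ / 2) :
    ‖ζ ^ 2 - a ^ 2‖ ≤ 4 * ‖z ^ 2 - a ^ 2‖ := by
  have halve (b : ℂ) (hb : rootDist a ζ ≤ ‖ζ - b‖) : ‖ζ - b‖ ≤ 2 * ‖z - b‖ := by
    linarith [norm_sub_le_norm_sub_add_norm_sub ζ z b, norm_sub_rev z ζ]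
  have hsub := halve a (min_le_left _ _)
  have hadd : ‖ζ + a‖ ≤ 2 * ‖z + a‖ := by
    simpa using halve (-a) (by rw [sub_neg_eq_add]; exact min_le_right _ _)
  rw [norm_sq_sub_sq, norm_sq_sub_sq]
  nlinarith [norm_nonneg (ζ - a), norm_nonneg (z + a)]

end rootDist

section strip

variable {β : ℝ} {ζ z : ℂ}

lemma sq_add_sq_eq_sq_sub_sq (ζ : ℂ) (β : ℝ) : ζ ^ 2 + (β : ℂ) ^ 2 = ζ ^ 2 - (I * β) ^ 2 := by
  rw [mul_pow, I_sq]
  ring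

lemma re_sq_add_sq_pos (hζ : |ζ.im| < β) : 0 < (ζ ^ 2 + (β : ℂ) ^ 2).re := by
  have : ζ.im ^ 2 < β ^ 2 := sq_lt_sq' (abs_lt.1 hζ).1 (abs_lt.1 hζ).2
  simp only [sq, add_re, mul_re, ofReal_re, ofReal_im]
  nlinarith [mul_self_nonneg ζ.re]

lemma sq_add_ofReal_mem_slitPlane {c : ℝ} (hc : 0 ≤ c) (h : z.re = 0 → z.im ^ 2 < c) :
    z ^ 2 + (c : ℂ) ∈ slitPlane := by
  rw [mem_slitPlane_iff]
  simp only [sq, add_re, add_im, mul_re, mul_im, ofReal_re, ofReal_im]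
  by_cases hre : z.re = 0
  · left
    nlinarith [h hre]
  by_cases him : z.im = 0
  · left
    simp only [him, mul_zero, sub_zero]
    linarith [mul_self_pos.2 hre]
  · right
    simpa [mul_comm z.im] using mul_ne_zero hre him

lemma norm_sub_I_mul_le_norm_sub (hζ : |ζ.im| < β) (hre : z.re = 0) (hβz : β ≤ z.im) :
    ‖ζ - I * β‖ ≤ ‖ζ - z‖ := by
  rw [← dist_eq_norm, ← dist_eq_norm, dist_eq_re_im, dist_eq_re_im]
  apply Real.sqrt_le_sqrt
  have := (abs_lt.1 hζ).2
  simp only [hre, mul_re, mul_im, I_re, I_im, ofReal_re, ofReal_im]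
  nlinarith

lemma rootDist_le_norm_sub (hζ : |ζ.im| < β) (hre : z.re = 0) (hβz : β ≤ |z.im|) :
    rootDist (I * β) ζ ≤ ‖ζ - z‖ := by
  rcases le_abs'.1 hβz with hneg | hpos
  · have := norm_sub_I_mul_le_norm_sub (ζ := -ζ) (z := -z) (by simpa using hζ) (by simp [hre])
      (by simp; linarith)
    rw [← neg_add', norm_neg, neg_sub_neg, norm_sub_rev] at this
    exact (min_le_right _ _).trans this
  · exact (min_le_left _ _).trans (norm_sub_I_mul_le_norm_sub hζ hre hpos)

lemma sub_abs_im_le_rootDist : β - |ζ.im| ≤ rootDist (I * β) ζ := by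
  refine le_min ((abs_im_le_norm _).trans' ?_) ((abs_im_le_norm _).trans' ?_)
  · rw [show (ζ - I * β).im = ζ.im - β by simp]
    linarith [neg_abs_le (ζ.im - β), le_abs_self ζ.im]
  · rw [show (ζ + I * β).im = ζ.im + β by simp]
    linarith [le_abs_self (ζ.im + β), neg_abs_le ζ.im]

lemma rootDist_pos (hζ : |ζ.im| < β) : 0 < rootDist (I * β) ζ := by
  linarith [sub_abs_im_le_rootDist (β := β) (ζ := ζ)]

lemma sq_add_sq_mem_slitPlane_of_mem_closedBall (hζ : |ζ.im| < β)
    (hz : z ∈ closedBall ζ (rootDist (I * β) ζ / 2)) :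
    z ^ 2 + (β : ℂ) ^ 2 ∈ slitPlane ∧ z ^ 2 + (β : ℂ) ^ 2 + 1 ∈ slitPlane := by
  have him : z.re = 0 → z.im ^ 2 < β ^ 2 := by
    intro hre
    by_contra! hβz
    have := rootDist_le_norm_sub hζ hre ((le_abs_self β).trans (sq_le_sq.1 hβz))
    rw [mem_closedBall, dist_eq_norm, norm_sub_rev] at hz
    linarith [rootDist_pos hζ]
  constructor
  · simpa using sq_add_ofReal_mem_slitPlane (sq_nonneg β) him
  · have := sq_add_ofReal_mem_slitPlane (c := β ^ 2 + 1) (by positivity)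
      fun hre => (him hre).trans (lt_add_one _)
    push_cast at this
    rwa [← add_assoc] at this

end strip

lemma differentiableAt_mFun {β u τ : ℝ} {z : ℂ} (h₁ : z ^ 2 + (β : ℂ) ^ 2 ∈ slitPlane)
    (h₂ : z ^ 2 + (β : ℂ) ^ 2 + 1 ∈ slitPlane) : DifferentiableAt ℂ (mFun β u τ) z :=
  ((by fun_prop : DifferentiableAt ℂ (fun z : ℂ ↦ z ^ 2 + (β : ℂ) ^ 2) z).cpow_const h₁).mul
    ((by fun_prop : DifferentiableAt ℂ (fun z : ℂ ↦ z ^ 2 + (β : ℂ) ^ 2 + 1) z).cpow_const h₂)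

lemma norm_cpow_mul_cpow_add_one_le {w : ℂ} (hw : w ≠ 0) (u : ℝ) {τ : ℝ} (hτ : 0 ≤ τ) :
    ‖w ^ (-(I * (u : ℂ)) - (τ : ℂ)) * (w + 1) ^ (τ : ℂ)‖ ≤
      Real.exp (π * |u|) * (1 + ‖w‖⁻¹) ^ τ := by
  have hw' : 0 < ‖w‖ := norm_pos_iff.2 hw
  have harg : Real.exp (arg w * u) ≤ Real.exp (π * |u|) := by
    refine Real.exp_le_exp.2 ((le_abs_self _).trans ?_)
    rw [abs_mul]
    gcongr
    exact abs_arg_le_pi w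
  have hpow : ‖w‖ ^ (-τ) * ‖w + 1‖ ^ τ ≤ (1 + ‖w‖⁻¹) ^ τ := by
    rw [rpow_neg hw'.le, ← inv_rpow hw'.le, ← mul_rpow (by positivity) (norm_nonneg _)]
    gcongr
    calc ‖w‖⁻¹ * ‖w + 1‖ ≤ ‖w‖⁻¹ * (‖w‖ + 1) := by gcongr; simpa using norm_add_le w 1
      _ = 1 + ‖w‖⁻¹ := by field_simp
  have hre : (-(I * (u : ℂ)) - τ).re = -τ := by simp
  have him : (-(I * (u : ℂ)) - τ).im = -u := by simp
  rw [norm_mul, norm_cpow_real]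
  refine (mul_le_mul_of_nonneg_right (norm_cpow_le _ _) (by positivity)).trans ?_
  rw [hre, him, mul_neg, Real.exp_neg, div_inv_eq_mul, mul_right_comm, mul_comm (Real.exp _)]
  gcongr

lemma norm_iteratedDeriv_mFun_le {β : ℝ} (u : ℝ) {τ : ℝ} (hτ : 0 ≤ τ) {ζ : ℂ}
    (hζ : |ζ.im| < β) (j : ℕ) :
    ‖iteratedDeriv j (mFun β u τ) ζ‖ ≤
      j ! * (Real.exp (π * |u|) * (1 + 4 / ‖ζ ^ 2 + (β : ℂ) ^ 2‖) ^ τ) /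
        (rootDist (I * β) ζ / 2) ^ j := by
  have hd : 0 < rootDist (I * β) ζ / 2 := half_pos (rootDist_pos hζ)
  have hslit := fun z ↦ sq_add_sq_mem_slitPlane_of_mem_closedBall (z := z) hζ
  have hwζ : 0 < ‖ζ ^ 2 + (β : ℂ) ^ 2‖ :=
    norm_pos_iff.2 (slitPlane_ne_zero (hslit ζ (mem_closedBall_self hd.le)).1)
  refine norm_iteratedDeriv_le_of_forall_mem_sphere_norm_le j hd ?_ fun z hz ↦ ?_
  · refine DifferentiableOn.diffContOnCl fun z hz ↦ ?_
    rw [closure_ball _ hd.ne'] at hz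
    exact (differentiableAt_mFun (hslit z hz).1 (hslit z hz).2).differentiableWithinAt
  · have hz' := sphere_subset_closedBall hz
    have hwz := slitPlane_ne_zero (hslit z hz').1
    refine (norm_cpow_mul_cpow_add_one_le hwz u hτ).trans ?_
    have hfour : ‖ζ ^ 2 + (β : ℂ) ^ 2‖ ≤ 4 * ‖z ^ 2 + (β : ℂ) ^ 2‖ := by
      rw [sq_add_sq_eq_sq_sub_sq, sq_add_sq_eq_sq_sub_sq]
      rw [mem_closedBall, dist_eq_norm] at hz'
      exact norm_sq_sub_sq_le_four_mul hz'
    gcongr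
    rw [inv_le_iff_one_le_mul₀ (norm_pos_iff.2 hwz), div_mul_eq_mul_div, le_div_iff₀ hwζ]
    linarith

/- Applied with `W = ‖ζ ^ 2 + β ^ 2‖`, `d = rootDist (I * β) ζ`, `ρ = ‖ζ‖`: for `ρ ≤ 2β` the first
entry of the `min` is used, for `ρ > 2β` the second. -/
lemma one_add_div_rpow_mul_min_div_pow_le {β τ W d ρ : ℝ} (hβ : 0 < β) (hτ : 0 ≤ τ) (hd : 0 < d)
    (hρ : 0 ≤ ρ) (hdW : d ^ 2 ≤ W) (hWd : W ≤ d * (ρ + β)) (hρd : ρ - β ≤ d) (j : ℕ) :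
    (1 + 4 / W) ^ τ * min (W ^ (τ + j)) (ρ ^ j) / (d / 2) ^ j ≤
      (9 * β ^ 2 + 4) ^ τ * (6 * β) ^ j + (1 + 4 / β ^ 2) ^ τ * 4 ^ j := by
  have hW : 0 < W := (pow_pos hd 2).trans_le hdW
  rcases le_or_gt ρ (2 * β) with hnear | hfar
  · have hdβ : d ≤ 3 * β := by nlinarith
    calc (1 + 4 / W) ^ τ * min (W ^ (τ + j)) (ρ ^ j) / (d / 2) ^ j
        ≤ (1 + 4 / W) ^ τ * W ^ (τ + j) / (d / 2) ^ j := by gcongr; exact min_le_left _ _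
      _ = (W + 4) ^ τ * (2 * W / d) ^ j := by
        rw [rpow_add hW, rpow_natCast, ← mul_assoc, ← mul_rpow (by positivity) hW.le, mul_div_assoc,
          ← div_pow]
        congr 2 <;> field_simp
      _ ≤ (9 * β ^ 2 + 4) ^ τ * (6 * β) ^ j := by
        gcongr
        · nlinarith
        · rw [div_le_iff₀ hd]; nlinarith
      _ ≤ _ := le_add_of_nonneg_right (by positivity)
  · have hβW : β ^ 2 ≤ W := by nlinarith
    calc (1 + 4 / W) ^ τ * min (W ^ (τ + j)) (ρ ^ j) / (d / 2) ^ j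
        ≤ (1 + 4 / W) ^ τ * ρ ^ j / (d / 2) ^ j := by gcongr; exact min_le_right _ _
      _ = (1 + 4 / W) ^ τ * (2 * ρ / d) ^ j := by
        rw [mul_div_assoc, ← div_pow]
        congr 2; field_simp
      _ ≤ (1 + 4 / β ^ 2) ^ τ * 4 ^ j := by
        gcongr
        rw [div_le_iff₀ hd]; linarith
      _ ≤ _ := le_add_of_nonneg_left (by positivity)

lemma norm_iteratedDeriv_mFun_mul_min_le {β : ℝ} (hβ : 0 < β) (u : ℝ) {τ : ℝ} (hτ : 0 ≤ τ)
    {ζ : ℂ} (hζ : |ζ.im| < β) (j : ℕ) :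
    ‖iteratedDeriv j (mFun β u τ) ζ‖ * min (‖ζ ^ 2 + (β : ℂ) ^ 2‖ ^ (τ + j)) (‖ζ‖ ^ j) ≤
      j ! * Real.exp (π * |u|) *
        ((9 * β ^ 2 + 4) ^ τ * (6 * β) ^ j + (1 + 4 / β ^ 2) ^ τ * 4 ^ j) := by
  have hIβ : ‖I * (β : ℂ)‖ = β := by simp [abs_of_pos hβ]
  have hdW : rootDist (I * β) ζ ^ 2 ≤ ‖ζ ^ 2 + (β : ℂ) ^ 2‖ := by
    rw [sq_add_sq_eq_sq_sub_sq]
    exact rootDist_sq_le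
  have hWd : ‖ζ ^ 2 + (β : ℂ) ^ 2‖ ≤ rootDist (I * β) ζ * (‖ζ‖ + β) := by
    rw [sq_add_sq_eq_sq_sub_sq]
    simpa only [hIβ] using norm_sq_sub_sq_le_rootDist_mul (a := I * β) (ζ := ζ)
  have hρd : ‖ζ‖ - β ≤ rootDist (I * β) ζ := by
    simpa only [hIβ] using norm_sub_norm_le_rootDist (a := I * β) (ζ := ζ)
  calc _ ≤ j ! * (Real.exp (π * |u|) * (1 + 4 / ‖ζ ^ 2 + (β : ℂ) ^ 2‖) ^ τ) /
          (rootDist (I * β) ζ / 2) ^ j * min (‖ζ ^ 2 + (β : ℂ) ^ 2‖ ^ (τ + j)) (‖ζ‖ ^ j) := by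
        gcongr
        exact norm_iteratedDeriv_mFun_le u hτ hζ j
    _ = j ! * Real.exp (π * |u|) * ((1 + 4 / ‖ζ ^ 2 + (β : ℂ) ^ 2‖) ^ τ *
          min (‖ζ ^ 2 + (β : ℂ) ^ 2‖ ^ (τ + j)) (‖ζ‖ ^ j) / (rootDist (I * β) ζ / 2) ^ j) := by
        ring
    _ ≤ _ := by
        gcongr
        exact one_add_div_rpow_mul_min_div_pow_le hβ hτ (rootDist_pos hζ) (norm_nonneg ζ) hdW hWd hρd j

theorem stmt5_general (β u τ : ℝ) (hβ : 0 < β) (hτ : 0 ≤ τ) (J : ℕ) :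
    -- `ζ²+β²` and `ζ²+β²+1` have strictly positive real part on the strip `S_β`
    (∀ ζ : ℂ, |ζ.im| < β → 0 < (ζ ^ 2 + (β : ℂ) ^ 2).re ∧
      0 < (ζ ^ 2 + (β : ℂ) ^ 2 + 1).re) ∧
    -- `m` is holomorphic on `S_β`
    DifferentiableOn ℂ (mFun β u τ) {ζ : ℂ | |ζ.im| < β} ∧
    -- `m` is even on `S_β`
    (∀ ζ : ℂ, |ζ.im| < β → mFun β u τ (-ζ) = mFun β u τ ζ) ∧
    -- `m ∈ H(S_β; J, τ)`: `|m⁽ʲ⁾(ζ)| ≤ C · max(|ζ²+β²|^{-τ-j}, |ζ|^{-j})` for `0 ≤ j ≤ J`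
    ∃ C : ℝ, ∀ ζ : ℂ, |ζ.im| < β → ∀ j : ℕ, j ≤ J →
      ‖iteratedDeriv j (mFun β u τ) ζ‖ *
        min (‖ζ ^ 2 + (β : ℂ) ^ 2‖ ^ (τ + (j : ℝ))) (‖ζ‖ ^ j) ≤ C := by
  have hre (ζ : ℂ) (hζ : |ζ.im| < β) :
      0 < (ζ ^ 2 + (β : ℂ) ^ 2).re ∧ 0 < (ζ ^ 2 + (β : ℂ) ^ 2 + 1).re := by
    have := re_sq_add_sq_pos hζ
    exact ⟨this, by rw [add_re, one_re]; linarith⟩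
  refine ⟨hre, fun ζ hζ ↦ ?_, fun ζ _ ↦ by simp [mFun], ?_⟩
  · obtain ⟨h₁, h₂⟩ := hre ζ hζ
    exact (differentiableAt_mFun (mem_slitPlane_iff.2 (.inl h₁))
      (mem_slitPlane_iff.2 (.inl h₂))).differentiableWithinAt
  set bound : ℕ → ℝ := fun j ↦ j ! * Real.exp (π * |u|) *
    ((9 * β ^ 2 + 4) ^ τ * (6 * β) ^ j + (1 + 4 / β ^ 2) ^ τ * 4 ^ j)
  refine ⟨∑ j ∈ Finset.range (J + 1), bound j, fun ζ hζ j hj ↦ ?_⟩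
  exact (norm_iteratedDeriv_mFun_mul_min_le hβ u hτ hζ j).trans
    (Finset.single_le_sum (f := bound) (fun i _ ↦ by positivity) (Finset.mem_range.2 (by omega)))

theorem stmt5 (β u τ : ℝ) (hβ : 0 < β) (hτ : 0 ≤ τ) (J : ℕ) (hJ : 0 < J) :
    -- `ζ²+β²` and `ζ²+β²+1` have strictly positive real part on the strip `S_β`
    (∀ ζ : ℂ, |ζ.im| < β → 0 < (ζ ^ 2 + (β : ℂ) ^ 2).re ∧
      0 < (ζ ^ 2 + (β : ℂ) ^ 2 + 1).re) ∧
    -- `m` is holomorphic on `S_β`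
    DifferentiableOn ℂ (mFun β u τ) {ζ : ℂ | |ζ.im| < β} ∧
    -- `m` is even on `S_β`
    (∀ ζ : ℂ, |ζ.im| < β → mFun β u τ (-ζ) = mFun β u τ ζ) ∧
    -- `m ∈ H(S_β; J, τ)`: `|m⁽ʲ⁾(ζ)| ≤ C · max(|ζ²+β²|^{-τ-j}, |ζ|^{-j})` for `0 ≤ j ≤ J`
    ∃ C : ℝ, ∀ ζ : ℂ, |ζ.im| < β → ∀ j : ℕ, j ≤ J →
      ‖iteratedDeriv j (mFun β u τ) ζ‖ *
        min (‖ζ ^ 2 + (β : ℂ) ^ 2‖ ^ (τ + (j : ℝ))) (‖ζ‖ ^ j) ≤ C :=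
  stmt5_general β u τ hβ hτ J
end
end

section
/- Let ω : ℝ → ℂ be a smooth compactly supported function and let J be a positive integer. There exists a constant C, depending only on ω and J, with the following property: for every A ≥ 0 and every function m : ℝ → ℂ of class C^J satisfying the Mihlin condition |m^{(ℓ)}(t)| ≤ A (1+|t|)^{−ℓ} for all t ∈ ℝ and 0 ≤ ℓ ≤ J, the function ω̂ ∗ m, defined by (ω̂ ∗ m)(x) = ∫_ℝ ω̂(x−s) m(s) ds where ω̂(ξ) = ∫_ℝ ω(t) e^{−iξt} dt, is of class C^J and satisfies |(ω̂ ∗ m)^{(ℓ)}(x)| ≤ C A (1+|x|)^{−ℓ} for all x ∈ ℝ and 0 ≤ ℓ ≤ J. (This is the estimate ‖ω̂ ∗ m‖_{Mih(J)} ≤ C ‖m‖_{Mih(J)} asserted in Step III of the proof of Theorem 3.5 of the paper.) -/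
open MeasureTheory

noncomputable section

/-- The Fourier transform `ω̂(ξ) = ∫ ω(t) e^{-iξt} dt` on the real line. -/
def hatR (ω : ℝ → ℂ) (ξ : ℝ) : ℂ :=
  ∫ t : ℝ, ω t * Complex.exp (-(Complex.I * (ξ : ℂ) * (t : ℂ)))

/-- The convolution `(ω̂ ∗ m)(x) = ∫ ω̂(x-s) m(s) ds`. -/
def convR (ω : ℝ → ℂ) (m : ℝ → ℂ) (x : ℝ) : ℂ := ∫ s : ℝ, hatR ω (x - s) * m s

/-!
`ω̂` is, up to rescaling the variable, the Fourier transform of the test function `ω`, hence a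
Schwartz function; in particular `∫ (1 + |u|)^J |ω̂(u)| du < ∞`. Writing
`(ω̂ ∗ m)(x) = ∫ ω̂(u) m(x - u) du`, all derivatives of order `≤ J` fall on `m`, and Peetre's
inequality `1 + |x| ≤ (1 + |u|)(1 + |x - u|)` turns the Mihlin bound for `m^{(ℓ)}(x - u)` into
`(1 + |u|)^J A (1 + |x|)^{-ℓ}`, which integrates against `|ω̂(u)|` to the claimed bound.
-/

open Real Filter FourierTransform SchwartzMap

namespace SchwartzMap

variable {D V : Type*} [NormedAddCommGroup D] [NormedSpace ℝ D] [NormedAddCommGroup V]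
  [NormedSpace ℝ V] [MeasurableSpace D] [BorelSpace D] [SecondCountableTopology D]

lemma integrable_one_add_norm_pow_mul (μ : Measure D) [μ.HasTemperateGrowth] (f : 𝓢(D, V))
    (k : ℕ) : Integrable (fun x ↦ (1 + ‖x‖) ^ k * ‖f x‖) μ := by
  refine (((f.integrable_pow_mul μ 0).add (f.integrable_pow_mul μ k)).const_mul
    (2 ^ (k - 1))).mono' (by fun_prop) (Eventually.of_forall fun x ↦ ?_)
  simp only [Pi.add_apply, pow_zero, one_mul]
  rw [norm_of_nonneg (by positivity)]
  calc (1 + ‖x‖) ^ k * ‖f x‖ ≤ 2 ^ (k - 1) * (1 + ‖x‖ ^ k) * ‖f x‖ := by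
        gcongr; simpa using add_pow_le zero_le_one (norm_nonneg x) k
    _ = _ := by ring

end SchwartzMap

lemma hatR_eq_fourier (ω : ℝ → ℂ) (ξ : ℝ) : hatR ω ξ = 𝓕 ω (ξ / (2 * π)) := by
  rw [Real.fourier_real_eq_integral_exp_smul, hatR]
  congr 1 with t
  rw [smul_eq_mul, mul_comm]
  congr 2
  have h : -2 * π * t * (ξ / (2 * π)) = -(ξ * t) := by field_simp
  rw [h]
  push_cast
  ring

lemma exists_schwartzMap_eq_hatR {ω : ℝ → ℂ} (hω : ContDiff ℝ (⊤ : ℕ∞) ω)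
    (hsupp : HasCompactSupport ω) : ∃ φ : 𝓢(ℝ, ℂ), ⇑φ = hatR ω := by
  let scale : ℝ ≃L[ℝ] ℝ := ContinuousLinearEquiv.unitsEquivAut ℝ (Units.mk0 (2 * π)⁻¹ (by simp))
  refine ⟨SchwartzMap.compCLMOfContinuousLinearEquiv ℂ scale (𝓕 (hsupp.toSchwartzMap hω)), ?_⟩
  ext ξ
  rw [hatR_eq_fourier, div_eq_mul_inv]
  rfl

lemma convR_eq_integral_mul_comp_sub (ω m : ℝ → ℂ) (x : ℝ) :
    convR ω m x = ∫ u, hatR ω u * m (x - u) := by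
  rw [convR, ← integral_sub_left_eq_self _ volume x]
  simp only [sub_sub_cancel]

section Convolution

variable {g m : ℝ → ℂ} {A B : ℝ}

lemma continuous_integral_mul_comp_sub (hg : Integrable g) (hm : Continuous m)
    (hbdd : ∀ t, ‖m t‖ ≤ A) : Continuous fun x ↦ ∫ u, g u * m (x - u) := by
  refine continuous_of_dominated (bound := fun u ↦ ‖g u‖ * A)
    (fun x ↦ hg.aestronglyMeasurable.mul (by fun_prop)) (fun x ↦ ?_) (hg.norm.mul_const A)
    (Eventually.of_forall fun u ↦ by fun_prop)
  exact Eventually.of_forall fun u ↦ by rw [norm_mul]; gcongr; exact hbdd _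

lemma hasDerivAt_integral_mul_comp_sub (hg : Integrable g) (hm : Differentiable ℝ m)
    (hbdd : ∀ t, ‖m t‖ ≤ A) (hbdd' : ∀ t, ‖deriv m t‖ ≤ B) (x : ℝ) :
    HasDerivAt (fun x ↦ ∫ u, g u * m (x - u)) (∫ u, g u * deriv m (x - u)) x := by
  have hmeas : ∀ y, AEStronglyMeasurable (fun u ↦ g u * m (y - u)) :=
    fun y ↦ hg.aestronglyMeasurable.mul
      (hm.continuous.comp (continuous_const.sub continuous_id)).aestronglyMeasurable
  refine (hasDerivAt_integral_of_dominated_loc_of_deriv_le (bound := fun u ↦ ‖g u‖ * B)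
    (F' := fun y u ↦ g u * deriv m (y - u)) (s := Set.univ) univ_mem (Eventually.of_forall hmeas)
    ((hg.norm.mul_const A).mono' (hmeas x) ?_)
    (hg.aestronglyMeasurable.mul
      ((measurable_deriv m).comp (measurable_const.sub measurable_id)).aestronglyMeasurable)
    ?_ (hg.norm.mul_const B) ?_).2
  · exact Eventually.of_forall fun u ↦ by rw [norm_mul]; gcongr; exact hbdd _
  · exact Eventually.of_forall fun u y _ ↦ by rw [norm_mul]; gcongr; exact hbdd' _
  · exact Eventually.of_forall fun u y _ ↦ ((hm (y - u)).hasDerivAt.comp_sub_const y u).const_mul (g u)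

variable {n : ℕ}

lemma iteratedDeriv_integral_mul_comp_sub (hg : Integrable g) (hm : ContDiff ℝ n m)
    (hbdd : ∀ ℓ ≤ n, ∀ t, ‖iteratedDeriv ℓ m t‖ ≤ A) {ℓ : ℕ} (hℓ : ℓ ≤ n) :
    iteratedDeriv ℓ (fun x ↦ ∫ u, g u * m (x - u)) =
      fun x ↦ ∫ u, g u * iteratedDeriv ℓ m (x - u) := by
  induction ℓ with
  | zero => simp
  | succ ℓ ih =>
    rw [iteratedDeriv_succ, ih (by omega)]
    ext x
    rw [iteratedDeriv_succ]
    refine (hasDerivAt_integral_mul_comp_sub (B := A) hg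
      (hm.differentiable_iteratedDeriv ℓ (by exact_mod_cast hℓ)) (hbdd ℓ (by omega)) ?_ x).deriv
    simpa [← iteratedDeriv_succ] using hbdd (ℓ + 1) hℓ

lemma contDiff_integral_mul_comp_sub (hg : Integrable g) (hm : ContDiff ℝ n m)
    (hbdd : ∀ ℓ ≤ n, ∀ t, ‖iteratedDeriv ℓ m t‖ ≤ A) :
    ContDiff ℝ n fun x ↦ ∫ u, g u * m (x - u) := by
  refine contDiff_iff_iteratedDeriv.2 ⟨fun ℓ hℓ ↦ ?_, fun ℓ hℓ ↦ ?_⟩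
  · rw [iteratedDeriv_integral_mul_comp_sub hg hm hbdd (by exact_mod_cast hℓ)]
    exact continuous_integral_mul_comp_sub hg
      (hm.continuous_iteratedDeriv ℓ (by exact_mod_cast hℓ)) (hbdd ℓ (by exact_mod_cast hℓ))
  · have hℓ : ℓ < n := by exact_mod_cast hℓ
    rw [iteratedDeriv_integral_mul_comp_sub hg hm hbdd hℓ.le]
    refine fun x ↦ (hasDerivAt_integral_mul_comp_sub (B := A) hg
      (hm.differentiable_iteratedDeriv ℓ (by exact_mod_cast hℓ)) (hbdd ℓ hℓ.le) ?_ x)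
      |>.differentiableAt
    simpa [← iteratedDeriv_succ] using hbdd (ℓ + 1) hℓ

end Convolution

lemma one_add_abs_le_mul_one_add_abs_sub (x u : ℝ) : 1 + |x| ≤ (1 + |u|) * (1 + |x - u|) := by
  have := abs_add_le u (x - u)
  rw [add_sub_cancel] at this
  nlinarith [abs_nonneg u, abs_nonneg (x - u)]

lemma div_one_add_abs_sub_pow_le {A : ℝ} (hA : 0 ≤ A) {ℓ J : ℕ} (hℓ : ℓ ≤ J) (x u : ℝ) :
    A / (1 + |x - u|) ^ ℓ ≤ (1 + |u|) ^ J * (A / (1 + |x|) ^ ℓ) :=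
  calc A / (1 + |x - u|) ^ ℓ = (1 + |u|) ^ ℓ * (A / ((1 + |u|) * (1 + |x - u|)) ^ ℓ) := by
        rw [mul_pow]; field_simp
    _ ≤ (1 + |u|) ^ ℓ * (A / (1 + |x|) ^ ℓ) := by
        gcongr; exact one_add_abs_le_mul_one_add_abs_sub x u
    _ ≤ (1 + |u|) ^ J * (A / (1 + |x|) ^ ℓ) := by
        gcongr
        exact le_add_of_nonneg_right (abs_nonneg u)

lemma norm_integral_mul_comp_sub_le {g f : ℝ → ℂ} {J ℓ : ℕ} {A : ℝ}
    (hg : Integrable fun u ↦ (1 + |u|) ^ J * ‖g u‖) (hA : 0 ≤ A) (hℓ : ℓ ≤ J)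
    (hf : ∀ t, ‖f t‖ ≤ A / (1 + |t|) ^ ℓ) (x : ℝ) :
    ‖∫ u, g u * f (x - u)‖ ≤ (∫ u, (1 + |u|) ^ J * ‖g u‖) * A / (1 + |x|) ^ ℓ := by
  rw [mul_div_assoc, ← integral_mul_const]
  refine (norm_integral_le_integral_norm _).trans (integral_mono_of_nonneg
    (Eventually.of_forall fun u ↦ norm_nonneg _) (hg.mul_const _)
    (Eventually.of_forall fun u ↦ ?_))
  calc ‖g u * f (x - u)‖ ≤ ‖g u‖ * ((1 + |u|) ^ J * (A / (1 + |x|) ^ ℓ)) := by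
        rw [norm_mul]; gcongr
        exact (hf (x - u)).trans (div_one_add_abs_sub_pow_le hA hℓ x u)
    _ = (1 + |u|) ^ J * ‖g u‖ * (A / (1 + |x|) ^ ℓ) := by ring

theorem stmt9_general (ω : ℝ → ℂ) (hω : ContDiff ℝ (⊤ : ℕ∞) ω) (hsupp : HasCompactSupport ω)
    (J : ℕ) :
    ∃ C : ℝ, ∀ A : ℝ, 0 ≤ A → ∀ m : ℝ → ℂ, ContDiff ℝ (J : ℕ∞) m →
      -- Mihlin condition of order `J` with constant `A`
      (∀ t : ℝ, ∀ ℓ : ℕ, ℓ ≤ J → ‖iteratedDeriv ℓ m t‖ ≤ A / (1 + |t|) ^ ℓ) →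
      -- `ω̂ ∗ m` is of class `C^J` and satisfies the Mihlin condition with constant `C·A`
      ContDiff ℝ (J : ℕ∞) (convR ω m) ∧
      ∀ x : ℝ, ∀ ℓ : ℕ, ℓ ≤ J →
        ‖iteratedDeriv ℓ (convR ω m) x‖ ≤ C * A / (1 + |x|) ^ ℓ := by
  obtain ⟨φ, hφ⟩ := exists_schwartzMap_eq_hatR hω hsupp
  have hweight : Integrable fun u : ℝ ↦ (1 + |u|) ^ J * ‖hatR ω u‖ := by
    simpa [← hφ] using φ.integrable_one_add_norm_pow_mul volume J
  refine ⟨∫ u, (1 + |u|) ^ J * ‖hatR ω u‖, fun A hA m hm hmih ↦ ?_⟩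
  have hbdd : ∀ ℓ ≤ J, ∀ t, ‖iteratedDeriv ℓ m t‖ ≤ A := fun ℓ hℓ t ↦
    (hmih t ℓ hℓ).trans (div_le_self hA (one_le_pow₀ (le_add_of_nonneg_right (abs_nonneg t))))
  have hconv : convR ω m = fun x ↦ ∫ u, hatR ω u * m (x - u) :=
    funext (convR_eq_integral_mul_comp_sub ω m)
  have hg : Integrable (hatR ω) := hφ ▸ φ.integrable
  refine ⟨hconv ▸ contDiff_integral_mul_comp_sub hg hm hbdd, fun x ℓ hℓ ↦ ?_⟩
  rw [hconv, iteratedDeriv_integral_mul_comp_sub hg hm hbdd hℓ]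
  exact norm_integral_mul_comp_sub_le hweight hA hℓ (fun t ↦ hmih t ℓ hℓ) x

theorem stmt9 (ω : ℝ → ℂ) (hω : ContDiff ℝ (⊤ : ℕ∞) ω) (hsupp : HasCompactSupport ω)
    (J : ℕ) (hJ : 0 < J) :
    ∃ C : ℝ, ∀ A : ℝ, 0 ≤ A → ∀ m : ℝ → ℂ, ContDiff ℝ (J : ℕ∞) m →
      -- Mihlin condition of order `J` with constant `A`
      (∀ t : ℝ, ∀ ℓ : ℕ, ℓ ≤ J → ‖iteratedDeriv ℓ m t‖ ≤ A / (1 + |t|) ^ ℓ) →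
      -- `ω̂ ∗ m` is of class `C^J` and satisfies the Mihlin condition with constant `C·A`
      ContDiff ℝ (J : ℕ∞) (convR ω m) ∧
      ∀ x : ℝ, ∀ ℓ : ℕ, ℓ ≤ J →
        ‖iteratedDeriv ℓ (convR ω m) x‖ ≤ C * A / (1 + |x|) ^ ℓ :=
  stmt9_general ω hω hsupp J
end
end
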